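/- arXiv:math/0508210 — 4 statements merged into one kernel-verified Lean document; each statement's English description precedes it below -/
import Mathlib

section
/- Suppose the equation u = L(f) + N_k(u,…,u) is quantitatively well posed in the Banach spaces D, S. Then there exist constants C₀, ε₀ > 0 such that for every f ∈ D with ∥f∥_D < ε₀ there exists a unique u[f] ∈ S with ∥u[f]∥_S < C₀ε₀ satisfying u[f] = L(f) + N_k(u[f],…,u[f]). Moreover, the maps A_n satisfy the homogeneity property A_n(λf) = λⁿ A_n(f) for all λ ∈ ℝ, n ≥ 1 and f ∈ D, there is C₂ > 0 with ∥A_n(f)∥_S ≤ C₂ⁿ ∥f∥_D^n for all n ≥ 1 and f ∈ D, and for every f with ∥f∥_D < ε₀ the series Σ_{n=1}^∞ A_n(f) converges absolutely in S with u[f] = Σ_{n=1}^∞ A_n(f). -/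
noncomputable section

set_option maxHeartbeats 1000000

open Finset Filter Topology

lemma awp_sum_biUnion_le {ι α : Type*} [DecidableEq α] (s : Finset ι) (t : ι → Finset α)
    (g : α → ℝ) (hg : ∀ a, 0 ≤ g a) :
    ∑ a ∈ s.biUnion t, g a ≤ ∑ i ∈ s, ∑ a ∈ t i, g a := by
  classical
  induction s using Finset.induction_on with
  | empty => simp
  | insert _ _ hi ih =>
    rename_i i s'
    rw [Finset.biUnion_insert, Finset.sum_insert hi]
    calc ∑ a ∈ t i ∪ s'.biUnion t, g a
        ≤ ∑ a ∈ t i, g a + ∑ a ∈ s'.biUnion t, g a := by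
          have h := Finset.sum_union_inter (s₁ := t i) (s₂ := s'.biUnion t) (f := g)
          have h2 : 0 ≤ ∑ a ∈ t i ∩ s'.biUnion t, g a := Finset.sum_nonneg fun a _ => hg a
          linarith
      _ ≤ ∑ a ∈ t i, g a + ∑ j ∈ s', ∑ a ∈ t j, g a := by linarith [ih]

lemma awp_key (k N : ℕ) (hk : 2 ≤ k) :
    (Finset.Icc 2 (N + 1)).biUnion
        (fun n => (Finset.Nat.antidiagonalTuple k n).filter fun c => ∀ i, 1 ≤ c i) =
      (Fintype.piFinset fun _ : Fin k => Finset.Icc 1 N).filter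
        fun c => ∑ i, c i ≤ N + 1 := by
  ext c
  simp only [Finset.mem_biUnion, Finset.mem_filter, Finset.Nat.mem_antidiagonalTuple,
    Fintype.mem_piFinset, Finset.mem_Icc]
  constructor
  · rintro ⟨n, hn, hsum, hpos⟩
    have hub : ∀ i, c i + (k - 1) ≤ n := by
      intro i
      have h1 : c i + ∑ j ∈ Finset.univ.erase i, c j = ∑ j, c j :=
        Finset.add_sum_erase _ _ (Finset.mem_univ i)
      have h2 : (k - 1) ≤ ∑ j ∈ Finset.univ.erase i, c j := by
        have := Finset.card_nsmul_le_sum (Finset.univ.erase i) c 1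
          (fun j _ => hpos j)
        simpa [Finset.card_erase_of_mem, Finset.card_univ] using this
      omega
    have hmem : ∀ i, 1 ≤ c i ∧ c i ≤ N := fun i => ⟨hpos i, by have := hub i; omega⟩
    exact ⟨hmem, by omega⟩
  · rintro ⟨hpi, hle⟩
    refine ⟨∑ i, c i, ⟨?_, hle⟩, rfl, fun i => (hpi i).1⟩
    have h2 : k ≤ ∑ i, c i := by
      have := Finset.card_nsmul_le_sum Finset.univ c 1 (fun j _ => (hpi j).1)
      simpa using this
    omega

lemma awp_part_lt (k n : ℕ) (hk : 2 ≤ k) (c : Fin k → ℕ) (hsum : ∑ i, c i = n)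
    (hpos : ∀ i, 1 ≤ c i) (i : Fin k) : c i < n := by
  have h1 : c i + ∑ j ∈ Finset.univ.erase i, c j = ∑ j, c j :=
    Finset.add_sum_erase _ _ (Finset.mem_univ i)
  have h2 : (k - 1) ≤ ∑ j ∈ Finset.univ.erase i, c j := by
    have := Finset.card_nsmul_le_sum (Finset.univ.erase i) c 1 (fun j _ => hpos j)
    simpa [Finset.card_erase_of_mem, Finset.card_univ] using this
  omega

lemma awp_disj (k : ℕ) (s : Finset ℕ) :
    Set.PairwiseDisjoint (↑s)
      (fun n => (Finset.Nat.antidiagonalTuple k n).filter fun c => ∀ i, 1 ≤ c i) := by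
  intro n _ m _ hnm
  simp only [Function.onFun, Finset.disjoint_left]
  intro c hc hc'
  simp only [Finset.mem_filter, Finset.Nat.mem_antidiagonalTuple] at hc hc'
  exact hnm (hc.1.symm.trans hc'.1)

lemma awp_shift {E : Type*} [AddCommMonoid E] (g : ℕ → E) (M : ℕ) :
    ∑ n ∈ Finset.range M, g (n + 1) = ∑ m ∈ Finset.Icc 1 M, g m := by
  rw [← Finset.Ico_add_one_right_eq_Icc, Finset.sum_Ico_eq_sum_range]
  exact Finset.sum_congr (by norm_num) fun i _ => by rw [Nat.add_comm]

lemma awp_insert (M : ℕ) : Finset.Icc 1 (M + 1) = insert 1 (Finset.Icc 2 (M + 1)) := by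
  ext m; simp only [Finset.mem_Icc, Finset.mem_insert]; omega

/-- **Standard well-posedness theorem** for the abstract equation `u = L f + N(u,…,u)`.
Suppose the equation is quantitatively well posed in the Banach spaces `D`, `S`, i.e.
`‖L f‖ ≤ C ‖f‖` and `‖N(u₁,…,u_k)‖ ≤ C ‖u₁‖ ⋯ ‖u_k‖`, and let `A n` be the nonlinear
maps defined recursively by `A 1 = L` and
`A n f = ∑_{n₁+⋯+n_k = n, nᵢ ≥ 1} N(A n₁ f, …, A n_k f)` for `n > 1`.
Then there are `C₀, ε₀ > 0` such that for every `f` with `‖f‖ < ε₀` there is a unique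
`u[f]` with `‖u[f]‖ < C₀ ε₀` solving `u[f] = L f + N(u[f],…,u[f])`; moreover
`A n (λ f) = λⁿ A n f`, `‖A n f‖ ≤ C₂ⁿ ‖f‖ⁿ` for some `C₂ > 0`, and for `‖f‖ < ε₀`
the series `∑_{n≥1} A n f` converges absolutely in `S` to `u[f]`. -/
theorem abstract_wellposedness
    {D S : Type*} [NormedAddCommGroup D] [NormedSpace ℝ D] [CompleteSpace D]
    [NormedAddCommGroup S] [NormedSpace ℝ S] [CompleteSpace S]
    (k : ℕ) (hk : 2 ≤ k)
    (L : D →ₗ[ℝ] S) (N : MultilinearMap ℝ (fun _ : Fin k => S) S)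
    (C : ℝ) (hC : 0 < C)
    (hL : ∀ f : D, ‖L f‖ ≤ C * ‖f‖)
    (hN : ∀ u : Fin k → S, ‖N u‖ ≤ C * ∏ i, ‖u i‖)
    (A : ℕ → D → S)
    (hA1 : ∀ f : D, A 1 f = L f)
    (hArec : ∀ n : ℕ, 2 ≤ n → ∀ f : D, A n f =
      ∑ c ∈ (Finset.Nat.antidiagonalTuple k n).filter (fun c => ∀ i, 1 ≤ c i),
        N (fun i => A (c i) f)) :
    ∃ C₀ ε₀ : ℝ, 0 < C₀ ∧ 0 < ε₀ ∧
      (∀ f : D, ‖f‖ < ε₀ →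
        ∃! u : S, ‖u‖ < C₀ * ε₀ ∧ u = L f + N (fun _ => u)) ∧
      (∀ (lam : ℝ) (n : ℕ), 1 ≤ n → ∀ f : D, A n (lam • f) = lam ^ n • A n f) ∧
      (∃ C₂ : ℝ, 0 < C₂ ∧ ∀ n : ℕ, 1 ≤ n → ∀ f : D, ‖A n f‖ ≤ C₂ ^ n * ‖f‖ ^ n) ∧
      (∀ f : D, ‖f‖ < ε₀ →
        Summable (fun n : ℕ => ‖A (n + 1) f‖) ∧
        ∀ u : S, ‖u‖ < C₀ * ε₀ → u = L f + N (fun _ => u) →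
          HasSum (fun n : ℕ => A (n + 1) f) u) := by
  classical
  haveI : Nonempty (Fin k) := ⟨⟨0, by omega⟩⟩
  have hk0 : (0:ℝ) < (k:ℝ) := by exact_mod_cast (by omega : 0 < k)
  set δ : ℝ := min 1 (1 / (2 * C * k)) with hδdef
  have hδpos : 0 < δ := lt_min one_pos (by positivity)
  have hδ1 : δ ≤ 1 := min_le_left _ _
  have hCkδ : C * k * δ ≤ 1 / 2 := by
    have h1 : δ ≤ 1 / (2 * C * k) := min_le_right _ _
    have h2 : C * k * δ ≤ C * k * (1 / (2 * C * k)) :=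
      mul_le_mul_of_nonneg_left h1 (by positivity)
    have h3 : C * k * (1 / (2 * C * k)) = 1 / 2 := by field_simp
    linarith
  have h2Cδ : 2 * C * δ ≤ 1 := by
    have hk2 : (2:ℝ) ≤ (k:ℝ) := by exact_mod_cast hk
    have hCδ : 0 ≤ C * δ := by positivity
    nlinarith [hCkδ, hk2, hCδ]
  set ε₀ : ℝ := δ / (2 * C) with hεdef
  have hεpos : 0 < ε₀ := by positivity
  have h2Cε : 2 * C * ε₀ = δ := by rw [hεdef]; field_simp
  -- homogeneity
  have hom : ∀ n : ℕ, 1 ≤ n → ∀ (lam : ℝ) (f : D), A n (lam • f) = lam ^ n • A n f := by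
    intro n
    induction n using Nat.strong_induction_on with
    | _ n ih =>
      intro hn lam f
      rcases eq_or_lt_of_le hn with h1 | h2
      · rw [← h1, hA1, hA1, map_smul, pow_one]
      · have hn2 : 2 ≤ n := h2
        rw [hArec n hn2, hArec n hn2, Finset.smul_sum]
        refine Finset.sum_congr rfl fun c hc => ?_
        simp only [Finset.mem_filter, Finset.Nat.mem_antidiagonalTuple] at hc
        have hlt : ∀ i, c i < n := awp_part_lt k n hk c hc.1 hc.2
        calc N (fun i => A (c i) (lam • f))
            = N (fun i => lam ^ (c i) • A (c i) f) := by
              congr 1; funext i; exact ih (c i) (hlt i) (hc.2 i) lam f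
          _ = (∏ i, lam ^ (c i)) • N (fun i => A (c i) f) := N.map_smul_univ _ _
          _ = lam ^ n • N (fun i => A (c i) f) := by
              rw [Finset.prod_pow_eq_pow_sum, hc.1]
  -- partial sum bound
  have hP : ∀ f : D, ‖f‖ < ε₀ → ∀ M : ℕ, ∑ m ∈ Finset.Icc 1 M, ‖A m f‖ ≤ 2 * C * ‖f‖ := by
    intro f hf M
    have hfn : 0 ≤ ‖f‖ := norm_nonneg f
    induction M with
    | zero => simp [show Finset.Icc 1 0 = ∅ from Finset.Icc_eq_empty (by omega)]; positivity
    | succ M ih =>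
      rw [awp_insert M, Finset.sum_insert (by simp)]
      have h1 : ‖A 1 f‖ ≤ C * ‖f‖ := by rw [hA1]; exact hL f
      have hsum_nonneg : 0 ≤ ∑ m ∈ Finset.Icc 1 M, ‖A m f‖ :=
        Finset.sum_nonneg fun _ _ => norm_nonneg _
      have h2 : ∑ n ∈ Finset.Icc 2 (M+1), ‖A n f‖
          ≤ C * (∑ m ∈ Finset.Icc 1 M, ‖A m f‖)^k := by
        calc ∑ n ∈ Finset.Icc 2 (M+1), ‖A n f‖
            ≤ ∑ n ∈ Finset.Icc 2 (M+1),
                ∑ c ∈ (Finset.Nat.antidiagonalTuple k n).filter (fun c => ∀ i, 1 ≤ c i),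
                  C * ∏ i, ‖A (c i) f‖ := by
              refine Finset.sum_le_sum fun n hn => ?_
              rw [hArec n (Finset.mem_Icc.1 hn).1 f]
              refine (norm_sum_le _ _).trans (Finset.sum_le_sum fun c _ => ?_)
              exact hN _
          _ = C * ∑ n ∈ Finset.Icc 2 (M+1),
                ∑ c ∈ (Finset.Nat.antidiagonalTuple k n).filter (fun c => ∀ i, 1 ≤ c i),
                  ∏ i, ‖A (c i) f‖ := by
              rw [Finset.mul_sum]
              exact Finset.sum_congr rfl fun n _ => by rw [Finset.mul_sum]
          _ = C * ∑ c ∈ (Finset.Icc 2 (M+1)).biUnion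
                (fun n => (Finset.Nat.antidiagonalTuple k n).filter fun c => ∀ i, 1 ≤ c i),
                  ∏ i, ‖A (c i) f‖ := by
              rw [Finset.sum_biUnion (awp_disj k _)]
          _ ≤ C * ∑ c ∈ Fintype.piFinset (fun _ : Fin k => Finset.Icc 1 M),
                  ∏ i, ‖A (c i) f‖ := by
              refine mul_le_mul_of_nonneg_left ?_ hC.le
              rw [awp_key k M hk]
              exact Finset.sum_le_sum_of_subset_of_nonneg (Finset.filter_subset _ _)
                (fun c _ _ => Finset.prod_nonneg fun _ _ => norm_nonneg _)
          _ = C * (∑ m ∈ Finset.Icc 1 M, ‖A m f‖)^k := by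
              rw [Finset.sum_prod_piFinset (Finset.Icc 1 M) (fun (_ : Fin k) m => ‖A m f‖),
                Finset.prod_const, Finset.card_univ, Fintype.card_fin]
      have h3 : (∑ m ∈ Finset.Icc 1 M, ‖A m f‖)^k ≤ (2 * C * ‖f‖)^k :=
        pow_le_pow_left₀ hsum_nonneg ih k
      have h4 : C * (2 * C * ‖f‖)^k ≤ C * ‖f‖ := by
        have h2Cf : 2 * C * ‖f‖ ≤ δ := by
          have := h2Cε ▸ (mul_le_mul_of_nonneg_left hf.le (by positivity : (0:ℝ) ≤ 2 * C))
          linarith [this]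
        have hknz : k - 1 ≠ 0 := by omega
        have hkk : k = (k - 1) + 1 := by omega
        have h5 : (2 * C * ‖f‖)^k = (2 * C * ‖f‖)^(k-1) * (2 * C * ‖f‖) := by
          rw [hkk]; rw [pow_succ]; congr 1 <;> rw [← hkk]
        have h6 : (2 * C * ‖f‖)^(k-1) ≤ δ^(k-1) :=
          pow_le_pow_left₀ (by positivity) h2Cf _
        have h7 : δ^(k-1) ≤ δ := pow_le_of_le_one hδpos.le hδ1 hknz
        have h8 : (2 * C * ‖f‖)^(k-1) ≤ δ := h6.trans h7
        calc C * (2 * C * ‖f‖)^k = C * ((2 * C * ‖f‖)^(k-1) * (2 * C * ‖f‖)) := by rw [h5]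
          _ ≤ C * (δ * (2 * C * ‖f‖)) := by
              refine mul_le_mul_of_nonneg_left ?_ hC.le
              exact mul_le_mul_of_nonneg_right h8 (by positivity)
          _ = (2 * C * δ) * (C * ‖f‖) := by ring
          _ ≤ 1 * (C * ‖f‖) := by
              refine mul_le_mul_of_nonneg_right h2Cδ (by positivity)
          _ = C * ‖f‖ := one_mul _
      have := h2.trans ((mul_le_mul_of_nonneg_left h3 hC.le).trans h4)
      linarith
  -- uniqueness via contraction
  have huniq : ∀ (f : D) (u v : S), ‖u‖ ≤ δ → ‖v‖ ≤ δ →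
      u = L f + N (fun _ => u) → v = L f + N (fun _ => v) → u = v := by
    intro f u v hu hv hue hve
    have hsub : u - v = N (fun _ : Fin k => u) - N (fun _ : Fin k => v) := by
      conv_lhs => rw [hue, hve]
      abel
    have hle := N.norm_image_sub_le_of_bound hC.le hN (fun _ : Fin k => u) (fun _ : Fin k => v)
    have hcc : ((fun _ : Fin k => u) - fun _ : Fin k => v) = fun _ : Fin k => u - v := rfl
    rw [hcc, pi_norm_const, pi_norm_const, pi_norm_const, Fintype.card_fin] at hle
    have h3 : ‖u - v‖ ≤ (1/2) * ‖u - v‖ := by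
      have hmax : max ‖u‖ ‖v‖ ≤ δ := max_le hu hv
      have h4 : (max ‖u‖ ‖v‖)^(k-1) ≤ δ^(k-1) :=
        pow_le_pow_left₀ (le_max_of_le_left (norm_nonneg u)) hmax _
      have h5 : δ^(k-1) ≤ δ := pow_le_of_le_one hδpos.le hδ1 (by omega)
      calc ‖u - v‖ = ‖N (fun _ : Fin k => u) - N (fun _ : Fin k => v)‖ := by rw [hsub]
        _ ≤ C * k * (max ‖u‖ ‖v‖)^(k-1) * ‖u - v‖ := hle
        _ ≤ C * k * δ * ‖u - v‖ := by
            refine mul_le_mul_of_nonneg_right ?_ (norm_nonneg _)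
            exact mul_le_mul_of_nonneg_left (h4.trans h5) (by positivity)
        _ ≤ (1/2) * ‖u - v‖ := mul_le_mul_of_nonneg_right hCkδ (norm_nonneg _)
    have h6 : ‖u - v‖ ≤ 0 := by linarith
    exact sub_eq_zero.1 (norm_le_zero_iff.1 h6)
  -- existence of solution as sum of series
  have hball : ∀ f : D, ‖f‖ < ε₀ →
      (Summable fun n : ℕ => ‖A (n + 1) f‖) ∧
        ∃ u : S, ‖u‖ ≤ 2 * C * ‖f‖ ∧ u = L f + N (fun _ => u) ∧
          HasSum (fun n : ℕ => A (n + 1) f) u := by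
    intro f hf
    have hsa : Summable fun n : ℕ => ‖A (n + 1) f‖ :=
      summable_of_sum_range_le (fun n => norm_nonneg _)
        (fun M => by rw [awp_shift (fun m => ‖A m f‖) M]; exact hP f hf M)
    have hsA : Summable fun n : ℕ => A (n + 1) f := Summable.of_norm hsa
    refine ⟨hsa, ∑' n, A (n + 1) f, ?_, ?_, hsA.hasSum⟩
    · exact (norm_tsum_le_tsum_norm hsa).trans
        (Summable.tsum_le_of_sum_range_le hsa fun M => by
          rw [awp_shift (fun m => ‖A m f‖) M]; exact hP f hf M)
    · -- fixed point property
      have hsafull : Summable fun m : ℕ => ‖A m f‖ :=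
        (summable_nat_add_iff 1).1 hsa
      have hPtend : Tendsto (fun M => ∑ m ∈ Finset.Icc 1 M, A m f) atTop
          (𝓝 (∑' n, A (n + 1) f)) := by
        have h := hsA.hasSum.tendsto_sum_nat
        rwa [show (fun M : ℕ => ∑ n ∈ Finset.range M, A (n+1) f)
            = fun M => ∑ m ∈ Finset.Icc 1 M, A m f from
          funext fun M => awp_shift (fun m => A m f) M] at h
      -- T1 : continuity
      have hNcont : Continuous fun s : S => N (fun _ : Fin k => s) :=
        (N.continuous_of_bound C hN).comp (continuous_pi fun _ => continuous_id)
      have T1 : Tendsto (fun M => N (fun _ : Fin k => ∑ m ∈ Finset.Icc 1 M, A m f)) atTop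
          (𝓝 (N (fun _ : Fin k => ∑' n, A (n + 1) f))) :=
        (hNcont.tendsto _).comp hPtend
      -- expansion identity
      have hexp : ∀ M : ℕ, N (fun _ : Fin k => ∑ m ∈ Finset.Icc 1 M, A m f)
          = ((∑ m ∈ Finset.Icc 1 (M+1), A m f) - A 1 f) +
            ∑ c ∈ (Fintype.piFinset fun _ : Fin k => Finset.Icc 1 M).filter
              (fun c => ¬ ∑ i, c i ≤ M + 1), N fun i => A (c i) f := by
        intro M
        have h1 : N (fun _ : Fin k => ∑ m ∈ Finset.Icc 1 M, A m f)
            = ∑ c ∈ Fintype.piFinset (fun _ : Fin k => Finset.Icc 1 M),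
                N fun i => A (c i) f :=
          N.map_sum_finset (fun _ m => A m f) (fun _ => Finset.Icc 1 M)
        have h2 := Finset.sum_filter_add_sum_filter_not
          (Fintype.piFinset fun _ : Fin k => Finset.Icc 1 M)
          (fun c => ∑ i, c i ≤ M + 1) (fun c => N fun i => A (c i) f)
        have h3 : ∑ c ∈ (Fintype.piFinset fun _ : Fin k => Finset.Icc 1 M).filter
              (fun c => ∑ i, c i ≤ M + 1), N (fun i => A (c i) f)
            = ∑ n ∈ Finset.Icc 2 (M+1), A n f := by
          rw [← awp_key k M hk, Finset.sum_biUnion (awp_disj k _)]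
          exact Finset.sum_congr rfl fun n hn => (hArec n (Finset.mem_Icc.1 hn).1 f).symm
        have h4 : ∑ n ∈ Finset.Icc 2 (M+1), A n f
            = (∑ m ∈ Finset.Icc 1 (M+1), A m f) - A 1 f := by
          rw [awp_insert M, Finset.sum_insert (by simp)]; abel
        rw [h1, ← h2, h3, h4]
      -- remainder tends to zero
      have hRtend : Tendsto (fun M => ∑ c ∈ (Fintype.piFinset fun _ : Fin k =>
          Finset.Icc 1 M).filter (fun c => ¬ ∑ i, c i ≤ M + 1),
            N fun i => A (c i) f) atTop (𝓝 0) := by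
        have htail0 : Tendsto (fun j : ℕ => ∑' i, ‖A (i + j) f‖) atTop (𝓝 0) :=
          tendsto_sum_nat_add fun m => ‖A m f‖
        have hm0 : Tendsto (fun M : ℕ => M / k + 1) atTop atTop := by
          apply Filter.tendsto_atTop_atTop.2
          intro b
          exact ⟨b * k, fun M hM => by
            have : b ≤ M / k := (Nat.le_div_iff_mul_le (by omega)).2 hM
            omega⟩
        have hbtend : Tendsto (fun M : ℕ => (C * k * (2 * C * ‖f‖)^(k-1)) *
            ∑' i, ‖A (i + (M / k + 1)) f‖) atTop (𝓝 0) := by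
          have h := (htail0.comp hm0).const_mul (C * k * (2 * C * ‖f‖)^(k-1))
          rw [mul_zero] at h
          exact h
        refine squeeze_zero_norm (fun M => ?_) hbtend
        -- bound the remainder for fixed M
        set j : ℕ := M / k + 1 with hjdef
        have hRnorm : ‖∑ c ∈ (Fintype.piFinset fun _ : Fin k => Finset.Icc 1 M).filter
            (fun c => ¬ ∑ i, c i ≤ M + 1), N fun i => A (c i) f‖
            ≤ C * ∑ c ∈ (Fintype.piFinset fun _ : Fin k => Finset.Icc 1 M).filter
              (fun c => ¬ ∑ i, c i ≤ M + 1), ∏ i, ‖A (c i) f‖ := by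
          rw [Finset.mul_sum]
          exact (norm_sum_le _ _).trans (Finset.sum_le_sum fun c _ => hN _)
        have hsubset : (Fintype.piFinset fun _ : Fin k => Finset.Icc 1 M).filter
              (fun c => ¬ ∑ i, c i ≤ M + 1)
            ⊆ Finset.univ.biUnion (fun i : Fin k => Fintype.piFinset fun j' =>
                if j' = i then Finset.Icc j M else Finset.Icc 1 M) := by
          intro c hc
          simp only [Finset.mem_filter, Fintype.mem_piFinset, Finset.mem_Icc] at hc
          obtain ⟨hpi, hgt⟩ := hc
          have hex : ∃ i, j ≤ c i := by
            by_contra hcon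
            push_neg at hcon
            have hle : ∀ i, c i ≤ M / k := fun i => by have := hcon i; omega
            have h1 : ∑ i, c i ≤ k * (M / k) := by
              have := Finset.sum_le_card_nsmul Finset.univ c (M / k)
                (fun i _ => hle i)
              simpa [Finset.card_univ, Fintype.card_fin, smul_eq_mul] using this
            have h2 : k * (M / k) ≤ M := by
              rw [Nat.mul_comm]
              exact Nat.div_mul_le_self M k
            omega
          obtain ⟨i, hi⟩ := hex
          simp only [Finset.mem_biUnion, Fintype.mem_piFinset]
          refine ⟨i, Finset.mem_univ i, ?_⟩
          intro j'
          by_cases hji : j' = i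
          · subst hji
            rw [if_pos rfl, Finset.mem_Icc]
            exact ⟨hi, (hpi j').2⟩
          · rw [if_neg hji, Finset.mem_Icc]
            exact hpi j'
        have hprodnn : ∀ c : Fin k → ℕ, 0 ≤ ∏ i, ‖A (c i) f‖ :=
          fun c => Finset.prod_nonneg fun _ _ => norm_nonneg _
        have hstep1 : ∑ c ∈ (Fintype.piFinset fun _ : Fin k => Finset.Icc 1 M).filter
              (fun c => ¬ ∑ i, c i ≤ M + 1), ∏ i, ‖A (c i) f‖
            ≤ ∑ i : Fin k, ∑ c ∈ (Fintype.piFinset fun j' =>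
                if j' = i then Finset.Icc j M else Finset.Icc 1 M), ∏ i', ‖A (c i') f‖ :=
          (Finset.sum_le_sum_of_subset_of_nonneg hsubset fun c _ _ => hprodnn c).trans
            (awp_sum_biUnion_le _ _ _ hprodnn)
        have hDi : ∀ i : Fin k, ∑ c ∈ (Fintype.piFinset fun j' =>
              if j' = i then Finset.Icc j M else Finset.Icc 1 M), ∏ i', ‖A (c i') f‖
            = (∑ m ∈ Finset.Icc j M, ‖A m f‖) *
              (∑ m ∈ Finset.Icc 1 M, ‖A m f‖)^(k-1) := by
          intro i
          rw [← Finset.prod_univ_sum (fun j' => if j' = i then Finset.Icc j M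
              else Finset.Icc 1 M) (fun (_ : Fin k) m => ‖A m f‖)]
          rw [← Finset.mul_prod_erase Finset.univ _ (Finset.mem_univ i)]
          rw [if_pos rfl]
          congr 1
          rw [Finset.prod_congr rfl (fun j' hj' => by
            rw [if_neg (Finset.ne_of_mem_erase hj')])]
          rw [Finset.prod_const, Finset.card_erase_of_mem (Finset.mem_univ i),
            Finset.card_univ, Fintype.card_fin]
        have hsafull : Summable fun m : ℕ => ‖A m f‖ := (summable_nat_add_iff 1).1 hsa
        have htail : ∑ m ∈ Finset.Icc j M, ‖A m f‖ ≤ ∑' i, ‖A (i + j) f‖ := by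
          rw [← Finset.Ico_add_one_right_eq_Icc, Finset.sum_Ico_eq_sum_range]
          have hsj : Summable fun i : ℕ => ‖A (i + j) f‖ :=
            (summable_nat_add_iff j).2 hsafull
          calc ∑ i ∈ Finset.range (M + 1 - j), ‖A (j + i) f‖
              = ∑ i ∈ Finset.range (M + 1 - j), ‖A (i + j) f‖ :=
                Finset.sum_congr rfl fun i _ => by rw [Nat.add_comm]
            _ ≤ ∑' i, ‖A (i + j) f‖ :=
                Summable.sum_le_tsum _ (fun _ _ => norm_nonneg _) hsj
        have htot : (∑ m ∈ Finset.Icc 1 M, ‖A m f‖)^(k-1) ≤ (2 * C * ‖f‖)^(k-1) :=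
          pow_le_pow_left₀ (Finset.sum_nonneg fun _ _ => norm_nonneg _) (hP f hf M) _
        have htailnn : 0 ≤ ∑ m ∈ Finset.Icc j M, ‖A m f‖ :=
          Finset.sum_nonneg fun _ _ => norm_nonneg _
        have htsumnn : 0 ≤ ∑' i, ‖A (i + j) f‖ := tsum_nonneg fun _ => norm_nonneg _
        calc ‖∑ c ∈ (Fintype.piFinset fun _ : Fin k => Finset.Icc 1 M).filter
              (fun c => ¬ ∑ i, c i ≤ M + 1), N fun i => A (c i) f‖
            ≤ C * ∑ c ∈ (Fintype.piFinset fun _ : Fin k => Finset.Icc 1 M).filter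
              (fun c => ¬ ∑ i, c i ≤ M + 1), ∏ i, ‖A (c i) f‖ := hRnorm
          _ ≤ C * ∑ i : Fin k, ((∑ m ∈ Finset.Icc j M, ‖A m f‖) *
              (∑ m ∈ Finset.Icc 1 M, ‖A m f‖)^(k-1)) := by
              refine mul_le_mul_of_nonneg_left ?_ hC.le
              refine hstep1.trans (le_of_eq (Finset.sum_congr rfl fun i _ => hDi i))
          _ = C * k * ((∑ m ∈ Finset.Icc j M, ‖A m f‖) *
              (∑ m ∈ Finset.Icc 1 M, ‖A m f‖)^(k-1)) := by
              rw [Finset.sum_const, Finset.card_univ, Fintype.card_fin, nsmul_eq_mul]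
              ring
          _ ≤ C * k * ((∑' i, ‖A (i + j) f‖) * (2 * C * ‖f‖)^(k-1)) := by
              refine mul_le_mul_of_nonneg_left ?_ (by positivity)
              exact mul_le_mul htail htot (by positivity) htsumnn
          _ = (C * k * (2 * C * ‖f‖)^(k-1)) * ∑' i, ‖A (i + j) f‖ := by ring
      -- T2 : limit of the expansion
      have T2 : Tendsto (fun M => N (fun _ : Fin k => ∑ m ∈ Finset.Icc 1 M, A m f)) atTop
          (𝓝 ((∑' n, A (n + 1) f) - A 1 f)) := by
        rw [show (fun M => N (fun _ : Fin k => ∑ m ∈ Finset.Icc 1 M, A m f))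
            = fun M => ((∑ m ∈ Finset.Icc 1 (M+1), A m f) - A 1 f) +
              ∑ c ∈ (Fintype.piFinset fun _ : Fin k => Finset.Icc 1 M).filter
                (fun c => ¬ ∑ i, c i ≤ M + 1), N fun i => A (c i) f from
            funext hexp]
        have hshift : Tendsto (fun M => ∑ m ∈ Finset.Icc 1 (M+1), A m f) atTop
            (𝓝 (∑' n, A (n + 1) f)) := hPtend.comp (tendsto_add_atTop_nat 1)
        simpa using (hshift.sub tendsto_const_nhds).add hRtend
      have hfix : N (fun _ : Fin k => ∑' n, A (n + 1) f)
          = (∑' n, A (n + 1) f) - A 1 f := tendsto_nhds_unique T1 T2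
      rw [hfix, hA1]; abel
  refine ⟨2 * C, ε₀, by positivity, hεpos, ?_, ?_, ?_, ?_⟩
  · -- existence and uniqueness
    intro f hf
    obtain ⟨hsa, u, hun, hufix, hus⟩ := hball f hf
    have huδ : ‖u‖ < 2 * C * ε₀ := lt_of_le_of_lt hun (by
      have := mul_lt_mul_of_pos_left hf (show (0:ℝ) < 2 * C by positivity)
      linarith)
    refine ⟨u, ⟨huδ, hufix⟩, ?_⟩
    rintro v ⟨hv1, hv2⟩
    have hvδ : ‖v‖ ≤ δ := by rw [← h2Cε]; exact hv1.le
    have huδ' : ‖u‖ ≤ δ := by rw [← h2Cε]; exact huδ.le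
    exact huniq f v u hvδ huδ' hv2 hufix
  · intro lam n hn f
    exact hom n hn lam f
  · -- geometric bound
    have hC₂pos : 0 < (2 / ε₀) * max (C * ε₀) 1 :=
      mul_pos (div_pos two_pos hεpos) (lt_of_lt_of_le one_pos (le_max_right _ _))
    refine ⟨(2 / ε₀) * max (C * ε₀) 1, hC₂pos, ?_⟩
    intro n hn f
    by_cases hf0 : f = 0
    · subst hf0
      have h0 : A n ((0:ℝ) • (0:D)) = (0:ℝ) ^ n • A n 0 := hom n hn 0 0
      rw [zero_smul, zero_pow (by omega : n ≠ 0), zero_smul] at h0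
      rw [h0, norm_zero, norm_zero, zero_pow (by omega : n ≠ 0), mul_zero]
    · have hfn : 0 < ‖f‖ := norm_pos_iff.2 hf0
      set lam : ℝ := ε₀ / (2 * ‖f‖) with hlamdef
      have hlam : 0 < lam := by positivity
      have hg : ‖lam • f‖ = ε₀ / 2 := by
        rw [norm_smul, Real.norm_eq_abs, abs_of_pos hlam, hlamdef]
        field_simp
      have hglt : ‖lam • f‖ < ε₀ := by rw [hg]; linarith
      have h1 : ‖A n (lam • f)‖ ≤ C * ε₀ := by
        have h2 := hP (lam • f) hglt n
        have h3 : ‖A n (lam • f)‖ ≤ ∑ m ∈ Finset.Icc 1 n, ‖A m (lam • f)‖ :=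
          Finset.single_le_sum (f := fun m => ‖A m (lam • f)‖) (fun _ _ => norm_nonneg _)
            (Finset.mem_Icc.2 ⟨hn, le_refl n⟩)
        rw [hg] at h2
        linarith
      have h4 : ‖A n (lam • f)‖ = lam ^ n * ‖A n f‖ := by
        rw [hom n hn lam f, norm_smul, Real.norm_eq_abs, abs_of_pos (pow_pos hlam n)]
      have h5 : lam ^ n * ‖A n f‖ ≤ C * ε₀ := h4 ▸ h1
      have hid : lam ^ n * ((2 / ε₀) ^ n * ‖f‖ ^ n) = 1 := by
        rw [← mul_pow, ← mul_pow]
        have hone : lam * (2 / ε₀ * ‖f‖) = 1 := by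
          rw [hlamdef]; field_simp
        rw [hone, one_pow]
      have hmax : C * ε₀ ≤ (max (C * ε₀) 1) ^ n :=
        (le_max_left _ _).trans (le_self_pow₀ (le_max_right _ _) (by omega))
      have hpos2 : (0:ℝ) ≤ (2 / ε₀) ^ n * ‖f‖ ^ n := by positivity
      calc ‖A n f‖ = ‖A n f‖ * (lam ^ n * ((2 / ε₀) ^ n * ‖f‖ ^ n)) := by
            rw [hid, mul_one]
        _ = (lam ^ n * ‖A n f‖) * ((2 / ε₀) ^ n * ‖f‖ ^ n) := by ring
        _ ≤ (C * ε₀) * ((2 / ε₀) ^ n * ‖f‖ ^ n) := mul_le_mul_of_nonneg_right h5 hpos2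
        _ ≤ (max (C * ε₀) 1) ^ n * ((2 / ε₀) ^ n * ‖f‖ ^ n) :=
            mul_le_mul_of_nonneg_right hmax hpos2
        _ = ((2 / ε₀) * max (C * ε₀) 1) ^ n * ‖f‖ ^ n := by
            rw [mul_pow]; ring
  · -- convergence of the series to the solution
    intro f hf
    obtain ⟨hsa, u, hun, hufix, hus⟩ := hball f hf
    refine ⟨hsa, fun v hv1 hv2 => ?_⟩
    have huδ : ‖u‖ ≤ δ := by
      have := mul_lt_mul_of_pos_left hf (show (0:ℝ) < 2 * C by positivity)
      rw [← h2Cε]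
      linarith
    have hvδ : ‖v‖ ≤ δ := by rw [← h2Cε]; exact hv1.le
    have hvu : v = u := huniq f v u hvδ huδ hv2 hufix
    rw [hvu]
    exact hus
end
end

section
/- Suppose the equation u = L(f) + N_k(u,…,u) is quantitatively well posed in the Banach spaces D, S. Then there exists a constant C₁ > 0 such that for all f, g ∈ D and all n ≥ 1, ∥A_n(f) − A_n(g)∥_S ≤ ∥f−g∥_D · C₁ⁿ · (∥f∥_D + ∥g∥_D)^{n−1}. -/
noncomputable section

set_option maxHeartbeats 1000000


private lemma sum_inv_sq_le (n : ℕ) : ∑ m ∈ Finset.Icc 1 n, (1:ℝ)/(m:ℝ)^2 ≤ 2 := by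
  induction n with
  | zero => simp
  | succ n ih =>
    rcases Nat.eq_zero_or_pos n with h | h
    · subst h; norm_num
    have key : ∀ m : ℕ, 1 ≤ m → ∑ x ∈ Finset.Icc 1 m, (1:ℝ)/(x:ℝ)^2 ≤ 2 - 1/(m:ℝ) := by
      intro m hm
      induction m with
      | zero => omega
      | succ m ih2 =>
        rcases Nat.eq_zero_or_pos m with h0 | h0
        · subst h0; norm_num
        have hsum := ih2 h0
        rw [Finset.sum_Icc_succ_top (by omega : 1 ≤ m + 1)]
        have hm0 : (0:ℝ) < (m:ℝ) := by exact_mod_cast h0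
        have hm1 : (0:ℝ) < (m:ℝ) + 1 := by linarith
        have : (1:ℝ)/((m:ℕ)+1:ℝ)^2 ≤ 1/(m:ℝ) - 1/((m:ℝ)+1) := by
          rw [div_sub_div _ _ (ne_of_gt hm0) (ne_of_gt hm1)]
          rw [div_le_div_iff₀ (by positivity) (by positivity)]
          ring_nf
          nlinarith [hm0]
        push_cast at this ⊢
        linarith
    have := key (n+1) (by omega)
    have : (0:ℝ) < ((n:ℝ)+1) := by positivity
    have h1 : (1:ℝ)/((n:ℝ)+1) > 0 := by positivity
    have := key (n+1) (by omega)
    push_cast at this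
    linarith

private lemma comb_bound (k n : ℕ) (hk : 2 ≤ k) (hn : 1 ≤ n) :
    ∑ c ∈ (Finset.Nat.antidiagonalTuple k n).filter (fun c => ∀ i, 1 ≤ c i),
      ∏ i, (1:ℝ)/((c i:ℝ))^2 ≤ (k:ℝ)^3 * 2^(k-1) / (n:ℝ)^2 := by
  classical
  set Sn := (Finset.Nat.antidiagonalTuple k n).filter (fun c => ∀ i, 1 ≤ c i) with hSn
  have hmem : ∀ c ∈ Sn, (∑ i, c i = n) ∧ ∀ i, 1 ≤ c i := by
    intro c hc
    rw [hSn, Finset.mem_filter, Finset.Nat.mem_antidiagonalTuple] at hc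
    exact hc
  have hn0 : (0:ℝ) < (n:ℝ) := by exact_mod_cast hn
  have hk0 : (0:ℝ) < (k:ℝ) := by positivity
  -- pointwise bound
  have pointwise : ∀ c ∈ Sn, ∏ i, (1:ℝ)/((c i:ℝ))^2 ≤
      (k:ℝ)^2/(n:ℝ)^2 * ∑ j, ∏ i ∈ Finset.univ.erase j, (1:ℝ)/((c i:ℝ))^2 := by
    intro c hc
    obtain ⟨hcs, hc1⟩ := hmem c hc
    obtain ⟨j, -, hj⟩ := Finset.exists_max_image Finset.univ c
      ⟨(⟨0, by omega⟩ : Fin k), Finset.mem_univ _⟩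
    have hjn : n ≤ k * c j := by
      calc n = ∑ i, c i := hcs.symm
        _ ≤ ∑ _i : Fin k, c j := Finset.sum_le_sum (fun i _ => hj i (Finset.mem_univ i))
        _ = k * c j := by simp [Finset.sum_const, mul_comm]
    have hcj1 : 1 ≤ c j := hc1 j
    have hcj0 : (0:ℝ) < (c j:ℝ) := by exact_mod_cast hcj1
    have h1 : (1:ℝ)/((c j:ℝ))^2 ≤ (k:ℝ)^2/(n:ℝ)^2 := by
      rw [div_le_div_iff₀ (by positivity) (by positivity)]
      have : (n:ℝ) ≤ (k:ℝ) * (c j:ℝ) := by exact_mod_cast hjn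
      nlinarith [hcj0, hn0]
    have h2 : ∏ i, (1:ℝ)/((c i:ℝ))^2
        = (1:ℝ)/((c j:ℝ))^2 * ∏ i ∈ Finset.univ.erase j, (1:ℝ)/((c i:ℝ))^2 :=
      (Finset.mul_prod_erase Finset.univ _ (Finset.mem_univ j)).symm
    have hprodnn : (0:ℝ) ≤ ∏ i ∈ Finset.univ.erase j, (1:ℝ)/((c i:ℝ))^2 :=
      Finset.prod_nonneg (fun i _ => by positivity)
    rw [h2]
    calc (1:ℝ)/((c j:ℝ))^2 * ∏ i ∈ Finset.univ.erase j, (1:ℝ)/((c i:ℝ))^2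
        ≤ (k:ℝ)^2/(n:ℝ)^2 * ∏ i ∈ Finset.univ.erase j, (1:ℝ)/((c i:ℝ))^2 :=
          mul_le_mul_of_nonneg_right h1 hprodnn
      _ ≤ (k:ℝ)^2/(n:ℝ)^2 * ∑ j', ∏ i ∈ Finset.univ.erase j', (1:ℝ)/((c i:ℝ))^2 := by
          apply mul_le_mul_of_nonneg_left _ (by positivity)
          exact Finset.single_le_sum (f := fun j' => ∏ i ∈ Finset.univ.erase j', (1:ℝ)/((c i:ℝ))^2)
            (fun j' _ => Finset.prod_nonneg (fun i _ => by positivity)) (Finset.mem_univ j)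
  -- for each j, sum over Sn of the erased product is at most 2^(k-1)
  have inner : ∀ j : Fin k, ∑ c ∈ Sn, ∏ i ∈ Finset.univ.erase j, (1:ℝ)/((c i:ℝ))^2 ≤ 2^(k-1) := by
    intro j
    set t : Fin k → Finset ℕ := fun i => if i = j then {0} else Finset.Icc 1 n with ht
    set φ : (Fin k → ℕ) → (Fin k → ℕ) := fun c => Function.update c j 0 with hφ
    have hinj : ∀ c ∈ Sn, ∀ c' ∈ Sn, φ c = φ c' → c = c' := by
      intro c hc c' hc' he
      obtain ⟨hcs, -⟩ := hmem c hc
      obtain ⟨hcs', -⟩ := hmem c' hc'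
      have hne : ∀ i, i ≠ j → c i = c' i := by
        intro i hi
        have := congrFun he i
        simpa [hφ, Function.update_of_ne hi] using this
      have hj : c j = c' j := by
        have e1 : c j + ∑ i ∈ Finset.univ.erase j, c i = n := by
          rw [Finset.add_sum_erase _ _ (Finset.mem_univ j)]; exact hcs
        have e2 : c' j + ∑ i ∈ Finset.univ.erase j, c' i = n := by
          rw [Finset.add_sum_erase _ _ (Finset.mem_univ j)]; exact hcs'
        have e3 : ∑ i ∈ Finset.univ.erase j, c i = ∑ i ∈ Finset.univ.erase j, c' i :=
          Finset.sum_congr rfl (fun i hi => hne i (Finset.ne_of_mem_erase hi))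
        omega
      funext i
      by_cases hi : i = j
      · subst hi; exact hj
      · exact hne i hi
    have hF : ∀ c : Fin k → ℕ, ∏ i ∈ Finset.univ.erase j, (1:ℝ)/((φ c i:ℝ))^2
        = ∏ i ∈ Finset.univ.erase j, (1:ℝ)/((c i:ℝ))^2 := by
      intro c
      refine Finset.prod_congr rfl (fun i hi => ?_)
      rw [hφ]; simp [Function.update_of_ne (Finset.ne_of_mem_erase hi)]
    calc ∑ c ∈ Sn, ∏ i ∈ Finset.univ.erase j, (1:ℝ)/((c i:ℝ))^2
        = ∑ c ∈ Sn, ∏ i ∈ Finset.univ.erase j, (1:ℝ)/((φ c i:ℝ))^2 :=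
          Finset.sum_congr rfl (fun c _ => (hF c).symm)
      _ = ∑ d ∈ Sn.image φ, ∏ i ∈ Finset.univ.erase j, (1:ℝ)/((d i:ℝ))^2 :=
          (Finset.sum_image (f := fun d => ∏ i ∈ Finset.univ.erase j, (1:ℝ)/((d i:ℝ))^2) hinj).symm
      _ ≤ ∑ d ∈ Fintype.piFinset t, ∏ i ∈ Finset.univ.erase j, (1:ℝ)/((d i:ℝ))^2 := by
          apply Finset.sum_le_sum_of_subset_of_nonneg
          · intro d hd
            obtain ⟨c, hc, rfl⟩ := Finset.mem_image.1 hd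
            obtain ⟨hcs, hc1⟩ := hmem c hc
            rw [Fintype.mem_piFinset]
            intro i
            by_cases hi : i = j
            · subst hi; simp [ht, hφ]
            · show Function.update c j 0 i ∈ t i
              rw [ht]
              simp only [if_neg hi]
              rw [Function.update_of_ne hi]
              rw [Finset.mem_Icc]
              refine ⟨hc1 i, ?_⟩
              calc c i ≤ ∑ i', c i' := Finset.single_le_sum (fun _ _ => Nat.zero_le _) (Finset.mem_univ i)
                _ = n := hcs
          · intro d _ _
            exact Finset.prod_nonneg (fun i _ => by positivity)
      _ = ∑ d ∈ Fintype.piFinset t, ∏ i, (if i = j then (1:ℝ) else (1:ℝ)/((d i:ℝ))^2) := by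
          refine Finset.sum_congr rfl (fun d _ => ?_)
          rw [← Finset.mul_prod_erase Finset.univ
            (fun i => if i = j then (1:ℝ) else (1:ℝ)/((d i:ℝ))^2) (Finset.mem_univ j)]
          rw [if_pos rfl, one_mul]
          exact Finset.prod_congr rfl
            (fun i hi => (if_neg (Finset.ne_of_mem_erase hi)).symm)
      _ = ∏ i, ∑ m ∈ t i, (if i = j then (1:ℝ) else (1:ℝ)/((m:ℝ))^2) := by
          rw [Finset.prod_univ_sum]
      _ ≤ 2^(k-1) := by
          rw [← Finset.mul_prod_erase Finset.univ _ (Finset.mem_univ j)]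
          have hj1 : ∑ m ∈ t j, (if j = j then (1:ℝ) else (1:ℝ)/((m:ℝ))^2) = 1 := by
            simp [ht]
          rw [hj1, one_mul]
          have hcard : (Finset.univ.erase j).card = k - 1 := by
            rw [Finset.card_erase_of_mem (Finset.mem_univ j), Finset.card_univ, Fintype.card_fin]
          rw [← hcard]
          calc ∏ i ∈ Finset.univ.erase j, ∑ m ∈ t i, (if i = j then (1:ℝ) else (1:ℝ)/((m:ℝ))^2)
              ≤ ∏ _i ∈ Finset.univ.erase j, (2:ℝ) := by
                apply Finset.prod_le_prod
                · intro i hi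
                  exact Finset.sum_nonneg (fun m _ => by positivity)
                · intro i hi
                  have hij : i ≠ j := Finset.ne_of_mem_erase hi
                  simp only [if_neg hij, ht]
                  exact sum_inv_sq_le n
            _ = (2:ℝ)^(Finset.univ.erase j).card := by rw [Finset.prod_const]
  calc ∑ c ∈ Sn, ∏ i, (1:ℝ)/((c i:ℝ))^2
      ≤ ∑ c ∈ Sn, (k:ℝ)^2/(n:ℝ)^2 * ∑ j, ∏ i ∈ Finset.univ.erase j, (1:ℝ)/((c i:ℝ))^2 :=
        Finset.sum_le_sum pointwise
    _ = (k:ℝ)^2/(n:ℝ)^2 * ∑ j, ∑ c ∈ Sn, ∏ i ∈ Finset.univ.erase j, (1:ℝ)/((c i:ℝ))^2 := by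
        rw [← Finset.mul_sum, Finset.sum_comm]
    _ ≤ (k:ℝ)^2/(n:ℝ)^2 * ∑ _j : Fin k, (2:ℝ)^(k-1) := by
        apply mul_le_mul_of_nonneg_left _ (by positivity)
        exact Finset.sum_le_sum (fun j _ => inner j)
    _ = (k:ℝ)^3 * 2^(k-1) / (n:ℝ)^2 := by
        simp [Finset.sum_const, Finset.card_univ]
        ring

private lemma growth_bound
    {D S : Type*} [NormedAddCommGroup D] [NormedSpace ℝ D]
    [NormedAddCommGroup S] [NormedSpace ℝ S]
    (k : ℕ) (hk : 2 ≤ k)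
    (N : MultilinearMap ℝ (fun _ : Fin k => S) S)
    (C : ℝ) (hC : 0 < C)
    (hN : ∀ u : Fin k → S, ‖N u‖ ≤ C * ∏ i, ‖u i‖)
    (A : ℕ → D → S)
    (hArec : ∀ n : ℕ, 2 ≤ n → ∀ f : D, A n f =
      ∑ c ∈ (Finset.Nat.antidiagonalTuple k n).filter (fun c => ∀ i, 1 ≤ c i),
        N (fun i => A (c i) f))
    (B : ℝ) (hB1 : 1 ≤ B)
    (hA1B : ∀ f : D, ‖A 1 f‖ ≤ B * ‖f‖)
    (hBk : C * (k:ℝ)^3 * 2^(k-1) ≤ B^(k-1)) :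
    ∀ n : ℕ, 1 ≤ n → ∀ f : D, ‖A n f‖ ≤ B^(2*n-1) * ‖f‖^n / (n:ℝ)^2 := by
  intro n
  induction n using Nat.strong_induction_on with
  | _ n ih =>
  intro hn f
  have hB0 : (0:ℝ) < B := lt_of_lt_of_le one_pos hB1
  rcases eq_or_lt_of_le hn with h1 | h2
  · rw [← h1]
    simpa using hA1B f
  · have hn2 : 2 ≤ n := h2
    rw [hArec n hn2 f]
    set Sn := (Finset.Nat.antidiagonalTuple k n).filter (fun c => ∀ i, 1 ≤ c i) with hSn
    have hmem : ∀ c ∈ Sn, (∑ i, c i = n) ∧ ∀ i, 1 ≤ c i := by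
      intro c hc
      rw [hSn, Finset.mem_filter, Finset.Nat.mem_antidiagonalTuple] at hc
      exact hc
    rcases Sn.eq_empty_or_nonempty with he | ⟨c₀, hc₀⟩
    · rw [he, Finset.sum_empty, norm_zero]
      positivity
    · have hkn : k ≤ n := by
        obtain ⟨hcs, hc1⟩ := hmem c₀ hc₀
        calc k = ∑ _i : Fin k, 1 := by simp
          _ ≤ ∑ i, c₀ i := Finset.sum_le_sum (fun i _ => hc1 i)
          _ = n := hcs
      have key : ∀ c ∈ Sn, ‖N (fun i => A (c i) f)‖ ≤
          C * B^(2*n-k) * ‖f‖^n * ∏ i, (1:ℝ)/((c i:ℝ))^2 := by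
        intro c hc
        obtain ⟨hcs, hc1⟩ := hmem c hc
        have hlt : ∀ i, c i < n := by
          intro i
          have hne : (Finset.univ.erase i).Nonempty := by
            rw [← Finset.card_pos, Finset.card_erase_of_mem (Finset.mem_univ i),
              Finset.card_univ, Fintype.card_fin]
            omega
          obtain ⟨i', hi'⟩ := hne
          have h1 : 1 ≤ ∑ i'' ∈ Finset.univ.erase i, c i'' :=
            le_trans (hc1 i') (Finset.single_le_sum (fun _ _ => Nat.zero_le _) hi')
          have h2 : c i + ∑ i'' ∈ Finset.univ.erase i, c i'' = n := by
            rw [Finset.add_sum_erase _ _ (Finset.mem_univ i)]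
            exact hcs
          omega
        have hexp : ∑ i, (2 * c i - 1) = 2*n - k := by
          have e1 : ∑ i, (2 * c i - 1) + k = 2 * n := by
            calc ∑ i, (2*c i - 1) + k = ∑ i, (2*c i - 1) + ∑ _i : Fin k, 1 := by simp
              _ = ∑ i, ((2*c i - 1) + 1) := Finset.sum_add_distrib.symm
              _ = ∑ i, 2 * c i := Finset.sum_congr rfl (fun i _ => by have := hc1 i; omega)
              _ = 2 * ∑ i, c i := by rw [Finset.mul_sum]
              _ = 2 * n := by rw [hcs]
          omega
        calc ‖N (fun i => A (c i) f)‖ ≤ C * ∏ i, ‖A (c i) f‖ := hN _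
          _ ≤ C * ∏ i, (B^(2*(c i)-1) * ‖f‖^(c i) * ((1:ℝ)/((c i:ℝ))^2)) := by
              apply mul_le_mul_of_nonneg_left _ hC.le
              apply Finset.prod_le_prod (fun i _ => norm_nonneg _)
              intro i _
              calc ‖A (c i) f‖ ≤ B^(2*(c i)-1) * ‖f‖^(c i) / ((c i:ℝ))^2 :=
                    ih (c i) (hlt i) (hc1 i) f
                _ = B^(2*(c i)-1) * ‖f‖^(c i) * ((1:ℝ)/((c i:ℝ))^2) := by ring
          _ = C * B^(2*n-k) * ‖f‖^n * ∏ i, (1:ℝ)/((c i:ℝ))^2 := by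
              rw [Finset.prod_mul_distrib, Finset.prod_mul_distrib,
                Finset.prod_pow_eq_pow_sum, Finset.prod_pow_eq_pow_sum, hcs, hexp]
              ring
      calc ‖∑ c ∈ Sn, N (fun i => A (c i) f)‖ ≤ ∑ c ∈ Sn, ‖N (fun i => A (c i) f)‖ :=
            norm_sum_le _ _
        _ ≤ ∑ c ∈ Sn, C * B^(2*n-k) * ‖f‖^n * ∏ i, (1:ℝ)/((c i:ℝ))^2 :=
            Finset.sum_le_sum key
        _ = C * B^(2*n-k) * ‖f‖^n * ∑ c ∈ Sn, ∏ i, (1:ℝ)/((c i:ℝ))^2 := by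
            rw [Finset.mul_sum]
        _ ≤ C * B^(2*n-k) * ‖f‖^n * ((k:ℝ)^3 * 2^(k-1) / (n:ℝ)^2) := by
            apply mul_le_mul_of_nonneg_left (comb_bound k n hk (by omega)) (by positivity)
        _ = (C * (k:ℝ)^3 * 2^(k-1)) * (B^(2*n-k) * ‖f‖^n / (n:ℝ)^2) := by ring
        _ ≤ B^(k-1) * (B^(2*n-k) * ‖f‖^n / (n:ℝ)^2) :=
            mul_le_mul_of_nonneg_right hBk (by positivity)
        _ = B^(2*n-1) * ‖f‖^n / (n:ℝ)^2 := by
            rw [show 2*n-1 = (k-1)+(2*n-k) by omega, pow_add]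
            ring

private lemma diff_bound
    {D S : Type*} [NormedAddCommGroup D] [NormedSpace ℝ D]
    [NormedAddCommGroup S] [NormedSpace ℝ S]
    (k : ℕ) (hk : 2 ≤ k)
    (N : MultilinearMap ℝ (fun _ : Fin k => S) S)
    (C : ℝ) (hC : 0 < C)
    (hN : ∀ u : Fin k → S, ‖N u‖ ≤ C * ∏ i, ‖u i‖)
    (A : ℕ → D → S)
    (hArec : ∀ n : ℕ, 2 ≤ n → ∀ f : D, A n f =
      ∑ c ∈ (Finset.Nat.antidiagonalTuple k n).filter (fun c => ∀ i, 1 ≤ c i),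
        N (fun i => A (c i) f))
    (B : ℝ) (hB1 : 1 ≤ B)
    (hA1d : ∀ f g : D, ‖A 1 f - A 1 g‖ ≤ B * ‖f - g‖)
    (hgrow : ∀ n : ℕ, 1 ≤ n → ∀ f : D, ‖A n f‖ ≤ B^(2*n-1) * ‖f‖^n / (n:ℝ)^2)
    (hBk4 : C * (k:ℝ)^4 * 2^(k-1) ≤ B^(k-1)) :
    ∀ n : ℕ, 1 ≤ n → ∀ f g : D,
      ‖A n f - A n g‖ ≤ ‖f - g‖ * B^(2*n-1) * (‖f‖ + ‖g‖)^(n-1) / (n:ℝ)^2 := by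
  intro n
  induction n using Nat.strong_induction_on with
  | _ n ih =>
  intro hn f g
  have hB0 : (0:ℝ) < B := lt_of_lt_of_le one_pos hB1
  set Q : ℝ := ‖f‖ + ‖g‖ with hQ
  have hQ0 : 0 ≤ Q := by positivity
  have hfQ : ‖f‖ ≤ Q := le_add_of_nonneg_right (norm_nonneg g)
  have hgQ : ‖g‖ ≤ Q := le_add_of_nonneg_left (norm_nonneg f)
  rcases eq_or_lt_of_le hn with h1 | h2
  · rw [← h1]
    simpa [mul_comm] using hA1d f g
  · have hn2 : 2 ≤ n := h2
    rw [hArec n hn2 f, hArec n hn2 g, ← Finset.sum_sub_distrib]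
    set Sn := (Finset.Nat.antidiagonalTuple k n).filter (fun c => ∀ i, 1 ≤ c i) with hSn
    have hmem : ∀ c ∈ Sn, (∑ i, c i = n) ∧ ∀ i, 1 ≤ c i := by
      intro c hc
      rw [hSn, Finset.mem_filter, Finset.Nat.mem_antidiagonalTuple] at hc
      exact hc
    rcases Sn.eq_empty_or_nonempty with he | ⟨c₀, hc₀⟩
    · rw [he, Finset.sum_empty, norm_zero]
      positivity
    · have hkn : k ≤ n := by
        obtain ⟨hcs, hc1⟩ := hmem c₀ hc₀
        calc k = ∑ _i : Fin k, 1 := by simp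
          _ ≤ ∑ i, c₀ i := Finset.sum_le_sum (fun i _ => hc1 i)
          _ = n := hcs
      have key : ∀ c ∈ Sn, ‖N (fun i => A (c i) f) - N (fun i => A (c i) g)‖ ≤
          C * (k:ℝ) * (‖f - g‖ * B^(2*n-k) * Q^(n-1) * ∏ i, (1:ℝ)/((c i:ℝ))^2) := by
        intro c hc
        obtain ⟨hcs, hc1⟩ := hmem c hc
        have hlt : ∀ i, c i < n := by
          intro i
          have hne : (Finset.univ.erase i).Nonempty := by
            rw [← Finset.card_pos, Finset.card_erase_of_mem (Finset.mem_univ i),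
              Finset.card_univ, Fintype.card_fin]
            omega
          obtain ⟨i', hi'⟩ := hne
          have h1 : 1 ≤ ∑ i'' ∈ Finset.univ.erase i, c i'' :=
            le_trans (hc1 i') (Finset.single_le_sum (fun _ _ => Nat.zero_le _) hi')
          have h2 : c i + ∑ i'' ∈ Finset.univ.erase i, c i'' = n := by
            rw [Finset.add_sum_erase _ _ (Finset.mem_univ i)]
            exact hcs
          omega
        have hexp : ∑ i, (2 * c i - 1) = 2*n - k := by
          have e1 : ∑ i, (2 * c i - 1) + k = 2 * n := by
            calc ∑ i, (2*c i - 1) + k = ∑ i, (2*c i - 1) + ∑ _i : Fin k, 1 := by simp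
              _ = ∑ i, ((2*c i - 1) + 1) := Finset.sum_add_distrib.symm
              _ = ∑ i, 2 * c i := Finset.sum_congr rfl (fun i _ => by have := hc1 i; omega)
              _ = 2 * ∑ i, c i := by rw [Finset.mul_sum]
              _ = 2 * n := by rw [hcs]
          omega
        -- the telescoping estimate from mathlib
        have tele := MultilinearMap.norm_image_sub_le_of_bound' N hC.le hN
          (fun i => A (c i) f) (fun i => A (c i) g)
        -- bound each summand (indexed by p) of the telescoping sum
        have inner : ∀ p : Fin k,
            (∏ i, if i = p then ‖A (c p) f - A (c p) g‖ else ‖A (c i) f‖ ⊔ ‖A (c i) g‖) ≤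
            ‖f - g‖ * B^(2*n-k) * Q^(n-1) * ∏ i, (1:ℝ)/((c i:ℝ))^2 := by
          intro p
          set E : Fin k → ℕ := fun i => if i = p then c i - 1 else c i with hE
          set G : Fin k → ℝ := fun i => if i = p then ‖f - g‖ else 1 with hG
          have hEsum : ∑ i, E i = n - 1 := by
            have e1 : c p + ∑ i ∈ Finset.univ.erase p, c i = n := by
              rw [Finset.add_sum_erase _ _ (Finset.mem_univ p)]
              exact hcs
            have e2 : ∑ i, E i = E p + ∑ i ∈ Finset.univ.erase p, E i :=
              (Finset.add_sum_erase _ _ (Finset.mem_univ p)).symm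
            have e3 : ∑ i ∈ Finset.univ.erase p, E i = ∑ i ∈ Finset.univ.erase p, c i :=
              Finset.sum_congr rfl (fun i hi => by
                rw [hE]; simp [if_neg (Finset.ne_of_mem_erase hi)])
            have e4 : E p = c p - 1 := by rw [hE]; simp
            have := hc1 p
            omega
          calc (∏ i, if i = p then ‖A (c p) f - A (c p) g‖ else ‖A (c i) f‖ ⊔ ‖A (c i) g‖)
              ≤ ∏ i, (G i * B^(2*(c i)-1) * Q^(E i) * ((1:ℝ)/((c i:ℝ))^2)) := by
                apply Finset.prod_le_prod
                · intro i _
                  by_cases hi : i = p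
                  · rw [if_pos hi]; exact norm_nonneg _
                  · rw [if_neg hi]
                    exact le_trans (norm_nonneg _) (le_max_left _ _)
                · intro i _
                  by_cases hi : i = p
                  · subst hi
                    rw [if_pos rfl]
                    have hGi : G i = ‖f - g‖ := by rw [hG]; simp
                    have hEi : E i = c i - 1 := by rw [hE]; simp
                    rw [hGi, hEi]
                    calc ‖A (c i) f - A (c i) g‖
                        ≤ ‖f - g‖ * B^(2*(c i)-1) * Q^(c i - 1) / ((c i:ℝ))^2 :=
                          ih (c i) (hlt i) (hc1 i) f g
                      _ = ‖f - g‖ * B^(2*(c i)-1) * Q^(c i - 1) * ((1:ℝ)/((c i:ℝ))^2) := by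
                          ring
                  · rw [if_neg hi]
                    have hGi : G i = 1 := by rw [hG]; simp [hi]
                    have hEi : E i = c i := by rw [hE]; simp [hi]
                    rw [hGi, hEi, one_mul]
                    have hb : ∀ h : D, ‖h‖ ≤ Q →
                        ‖A (c i) h‖ ≤ B^(2*(c i)-1) * Q^(c i) * ((1:ℝ)/((c i:ℝ))^2) := by
                      intro h hh
                      calc ‖A (c i) h‖ ≤ B^(2*(c i)-1) * ‖h‖^(c i) / ((c i:ℝ))^2 :=
                            hgrow (c i) (hc1 i) h
                        _ ≤ B^(2*(c i)-1) * Q^(c i) / ((c i:ℝ))^2 := by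
                            gcongr
                        _ = B^(2*(c i)-1) * Q^(c i) * ((1:ℝ)/((c i:ℝ))^2) := by ring
                    exact max_le (hb f hfQ) (hb g hgQ)
            _ = (∏ i, G i) * (∏ i, B^(2*(c i)-1)) * (∏ i, Q^(E i)) *
                  ∏ i, (1:ℝ)/((c i:ℝ))^2 := by
                rw [← Finset.prod_mul_distrib, ← Finset.prod_mul_distrib,
                  ← Finset.prod_mul_distrib]
            _ = ‖f - g‖ * B^(2*n-k) * Q^(n-1) * ∏ i, (1:ℝ)/((c i:ℝ))^2 := by
                rw [Finset.prod_pow_eq_pow_sum, Finset.prod_pow_eq_pow_sum, hexp, hEsum]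
                congr 2
                rw [hG]
                simp
        calc ‖N (fun i => A (c i) f) - N (fun i => A (c i) g)‖
            ≤ C * ∑ p, ∏ i, (if i = p then ‖A (c p) f - A (c p) g‖
                else ‖A (c i) f‖ ⊔ ‖A (c i) g‖) := tele
          _ ≤ C * ∑ _p : Fin k, (‖f - g‖ * B^(2*n-k) * Q^(n-1) * ∏ i, (1:ℝ)/((c i:ℝ))^2) := by
              apply mul_le_mul_of_nonneg_left _ hC.le
              exact Finset.sum_le_sum (fun p _ => inner p)
          _ = C * (k:ℝ) * (‖f - g‖ * B^(2*n-k) * Q^(n-1) * ∏ i, (1:ℝ)/((c i:ℝ))^2) := by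
              rw [Finset.sum_const, Finset.card_univ, Fintype.card_fin, nsmul_eq_mul]
              ring
      calc ‖∑ c ∈ Sn, (N (fun i => A (c i) f) - N (fun i => A (c i) g))‖
          ≤ ∑ c ∈ Sn, ‖N (fun i => A (c i) f) - N (fun i => A (c i) g)‖ := norm_sum_le _ _
        _ ≤ ∑ c ∈ Sn, C * (k:ℝ) * (‖f - g‖ * B^(2*n-k) * Q^(n-1) * ∏ i, (1:ℝ)/((c i:ℝ))^2) :=
            Finset.sum_le_sum key
        _ = C * (k:ℝ) * ‖f - g‖ * B^(2*n-k) * Q^(n-1) * ∑ c ∈ Sn, ∏ i, (1:ℝ)/((c i:ℝ))^2 := by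
            rw [Finset.mul_sum]
            exact Finset.sum_congr rfl (fun c _ => by ring)
        _ ≤ C * (k:ℝ) * ‖f - g‖ * B^(2*n-k) * Q^(n-1) * ((k:ℝ)^3 * 2^(k-1) / (n:ℝ)^2) := by
            apply mul_le_mul_of_nonneg_left (comb_bound k n hk (by omega)) (by positivity)
        _ = (C * (k:ℝ)^4 * 2^(k-1)) * (‖f - g‖ * B^(2*n-k) * Q^(n-1) / (n:ℝ)^2) := by ring
        _ ≤ B^(k-1) * (‖f - g‖ * B^(2*n-k) * Q^(n-1) / (n:ℝ)^2) :=
            mul_le_mul_of_nonneg_right hBk4 (by positivity)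
        _ = ‖f - g‖ * B^(2*n-1) * Q^(n-1) / (n:ℝ)^2 := by
            rw [show 2*n-1 = (k-1)+(2*n-k) by omega, pow_add]
            ring


/-- **Lipschitz bound for the Picard iterates.**  Suppose the abstract equation
`u = L f + N(u,…,u)` is quantitatively well posed in the Banach spaces `D`, `S`, and let
`A n` be the nonlinear maps defined recursively by `A 1 = L` and
`A n f = ∑_{n₁+⋯+n_k = n, nᵢ ≥ 1} N(A n₁ f, …, A n_k f)` for `n > 1`.  Then there is a
constant `C₁ > 0` such that for all `f, g ∈ D` and all `n ≥ 1`,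
`‖A n f − A n g‖ ≤ ‖f − g‖ · C₁ⁿ · (‖f‖ + ‖g‖)^{n−1}`. -/
theorem abstract_iterate_lipschitz
    {D S : Type*} [NormedAddCommGroup D] [NormedSpace ℝ D] [CompleteSpace D]
    [NormedAddCommGroup S] [NormedSpace ℝ S] [CompleteSpace S]
    (k : ℕ) (hk : 2 ≤ k)
    (L : D →ₗ[ℝ] S) (N : MultilinearMap ℝ (fun _ : Fin k => S) S)
    (C : ℝ) (hC : 0 < C)
    (hL : ∀ f : D, ‖L f‖ ≤ C * ‖f‖)
    (hN : ∀ u : Fin k → S, ‖N u‖ ≤ C * ∏ i, ‖u i‖)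
    (A : ℕ → D → S)
    (hA1 : ∀ f : D, A 1 f = L f)
    (hArec : ∀ n : ℕ, 2 ≤ n → ∀ f : D, A n f =
      ∑ c ∈ (Finset.Nat.antidiagonalTuple k n).filter (fun c => ∀ i, 1 ≤ c i),
        N (fun i => A (c i) f)) :
    ∃ C₁ : ℝ, 0 < C₁ ∧ ∀ f g : D, ∀ n : ℕ, 1 ≤ n →
      ‖A n f - A n g‖ ≤ ‖f - g‖ * C₁ ^ n * (‖f‖ + ‖g‖) ^ (n - 1) := by
  set B : ℝ := C * (k:ℝ)^4 * 2^k + 2 with hBdef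
  have hk1 : (1:ℝ) ≤ (k:ℝ) := by exact_mod_cast Nat.one_le_of_lt hk
  have hpos : (0:ℝ) ≤ C * (k:ℝ)^4 * 2^k := by positivity
  have hB1 : 1 ≤ B := by rw [hBdef]; linarith
  have hB0 : (0:ℝ) < B := lt_of_lt_of_le one_pos hB1
  have hone : (1:ℝ) ≤ (k:ℝ)^4 * 2^k := by
    have h1 : (1:ℝ) ≤ (k:ℝ)^4 := one_le_pow₀ hk1
    have h2 : (1:ℝ) ≤ (2:ℝ)^k := one_le_pow₀ one_le_two
    nlinarith
  have hCB : C ≤ B := by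
    rw [hBdef]
    nlinarith
  have hBk4 : C * (k:ℝ)^4 * 2^(k-1) ≤ B^(k-1) := by
    have t1 : (2:ℝ)^(k-1) ≤ (2:ℝ)^k := pow_le_pow_right₀ one_le_two (by omega)
    have h1 : C * (k:ℝ)^4 * 2^(k-1) ≤ C * (k:ℝ)^4 * 2^k :=
      mul_le_mul_of_nonneg_left t1 (by positivity)
    have h2 : C * (k:ℝ)^4 * 2^k ≤ B := by rw [hBdef]; linarith
    have h3 : B ≤ B^(k-1) := le_self_pow₀ hB1 (by omega)
    linarith
  have hBk3 : C * (k:ℝ)^3 * 2^(k-1) ≤ B^(k-1) := by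
    have t0 : (k:ℝ)^3 ≤ (k:ℝ)^4 := pow_le_pow_right₀ hk1 (by norm_num)
    have h1 : C * (k:ℝ)^3 * 2^(k-1) ≤ C * (k:ℝ)^4 * 2^(k-1) := by
      have := mul_le_mul_of_nonneg_left t0 hC.le
      have h2 : (0:ℝ) ≤ (2:ℝ)^(k-1) := by positivity
      nlinarith
    linarith
  have hA1B : ∀ f : D, ‖A 1 f‖ ≤ B * ‖f‖ := by
    intro f
    rw [hA1]
    exact le_trans (hL f) (mul_le_mul_of_nonneg_right hCB (norm_nonneg f))
  have hA1d : ∀ f g : D, ‖A 1 f - A 1 g‖ ≤ B * ‖f - g‖ := by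
    intro f g
    rw [hA1, hA1, ← map_sub]
    exact le_trans (hL (f - g)) (mul_le_mul_of_nonneg_right hCB (norm_nonneg _))
  have hgrow := growth_bound k hk N C hC hN A hArec B hB1 hA1B hBk3
  have hdiff := diff_bound k hk N C hC hN A hArec B hB1 hA1d hgrow hBk4
  refine ⟨B^2, by positivity, ?_⟩
  intro f g n hn
  have hn1 : (1:ℝ) ≤ (n:ℝ) := by exact_mod_cast hn
  calc ‖A n f - A n g‖ ≤ ‖f - g‖ * B^(2*n-1) * (‖f‖ + ‖g‖)^(n-1) / (n:ℝ)^2 :=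
        hdiff n hn f g
    _ ≤ ‖f - g‖ * B^(2*n-1) * (‖f‖ + ‖g‖)^(n-1) :=
        div_le_self (by positivity) (by nlinarith)
    _ ≤ ‖f - g‖ * (B^2)^n * (‖f‖ + ‖g‖)^(n-1) := by
        rw [← pow_mul]
        gcongr
        · omega
end
end

section
/- There is an absolute constant C > 0 with the following property. Let j₁, j₂ ≥ 0 be integers and D ≥ 0. Let f, g be reasonable functions on ℝ² supported on A_{j₁} and A_{j₂} respectively, and suppose that |ξ₁ − ξ₂| ≥ D whenever (τ₁,ξ₁) lies in the support of f and (τ₂,ξ₂) lies in the support of g. Then ∥f * g∥_{L²(ℝ²)} ≤ C 2^{j₁+j₂} ⟨D⟩^{−1/2} ∥f∥_X ∥g∥_X. -/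
open MeasureTheory Set
open scoped ENNReal NNReal

noncomputable section

/-- The Japanese bracket `⟨x⟩ = (1+|x|²)^{1/2}`. -/
def jap (x : ℝ) : ℝ := Real.sqrt (1 + x ^ 2)

/-- The dyadic annulus `A_j = {(τ,ξ) : 2^j ≤ ⟨ξ⟩ < 2^{j+1}}`. -/
def Aset (j : ℕ) : Set (ℝ × ℝ) := {p | (2 : ℝ) ^ j ≤ jap p.2 ∧ jap p.2 < (2 : ℝ) ^ (j + 1)}

/-- The parabolic shell `B_d = {(τ,ξ) : 2^d ≤ ⟨τ-ξ²⟩ < 2^{d+1}}`. -/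
def Bset (d : ℕ) : Set (ℝ × ℝ) :=
  {p | (2 : ℝ) ^ d ≤ jap (p.1 - p.2 ^ 2) ∧ jap (p.1 - p.2 ^ 2) < (2 : ℝ) ^ (d + 1)}

/-- `B_{≥d} = ⋃_{d' ≥ d} B_{d'}`. -/
def Bge (d : ℕ) : Set (ℝ × ℝ) := {p | (2 : ℝ) ^ d ≤ jap (p.1 - p.2 ^ 2)}

/-- `B_{≤d} = ⋃_{0 ≤ d' ≤ d} B_{d'}`. -/
def Ble (d : ℕ) : Set (ℝ × ℝ) := {p | jap (p.1 - p.2 ^ 2) < (2 : ℝ) ^ (d + 1)}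

/-- `B_{<d} = ⋃_{0 ≤ d' < d} B_{d'}` (empty when `d = 0`). -/
def Blt (d : ℕ) : Set (ℝ × ℝ) := ⋃ (d' : ℕ) (_ : d' < d), Bset d'

/-- `A_{≤j} = ⋃_{0 ≤ j' ≤ j} A_{j'}`. -/
def Ale (j : ℕ) : Set (ℝ × ℝ) := {p | jap p.2 < (2 : ℝ) ^ (j + 1)}

/-- A reasonable function: bounded, measurable, compactly supported. -/
def Reasonable (f : ℝ × ℝ → ℂ) : Prop :=
  Measurable f ∧ (∃ C : ℝ, ∀ p, ‖f p‖ ≤ C) ∧ HasCompactSupport f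

/-- A nonnegative (real-valued) function. -/
def NonnegFn (f : ℝ × ℝ → ℂ) : Prop := ∀ p, 0 ≤ (f p).re ∧ (f p).im = 0

/-- The `L²` norm of `f` restricted to a set `s ⊆ ℝ²`. -/
def L2On (f : ℝ × ℝ → ℂ) (s : Set (ℝ × ℝ)) : ℝ≥0∞ :=
  (∫⁻ p in s, (‖f p‖₊ : ℝ≥0∞) ^ 2) ^ (1 / 2 : ℝ)

/-- The `L²(ℝ²)` (equivalently `L²_ξ L²_τ`) norm. -/
def L2 (f : ℝ × ℝ → ℂ) : ℝ≥0∞ := (∫⁻ p : ℝ × ℝ, (‖f p‖₊ : ℝ≥0∞) ^ 2) ^ (1 / 2 : ℝ)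

/-- The `L¹_ξ L¹_τ` norm. -/
def L1L1 (f : ℝ × ℝ → ℂ) : ℝ≥0∞ := ∫⁻ p : ℝ × ℝ, (‖f p‖₊ : ℝ≥0∞)

/-- The weighted norm `∥⟨ξ⟩^{-1} f∥_{L²_ξ L¹_τ}` (inner norm in `τ`, outer in `ξ`). -/
def L2L1w (f : ℝ × ℝ → ℂ) : ℝ≥0∞ :=
  (∫⁻ ξ : ℝ, ((ENNReal.ofReal (jap ξ))⁻¹ * ∫⁻ τ : ℝ, (‖f (τ, ξ)‖₊ : ℝ≥0∞)) ^ 2) ^ (1 / 2 : ℝ)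

/-- The `L¹_ξ L²_τ` norm (inner norm in `τ`, outer in `ξ`). -/
def L1L2 (f : ℝ × ℝ → ℂ) : ℝ≥0∞ :=
  ∫⁻ ξ : ℝ, (∫⁻ τ : ℝ, (‖f (τ, ξ)‖₊ : ℝ≥0∞) ^ 2) ^ (1 / 2 : ℝ)

/-- The Besov-type norm
`∥f∥_X = (∑_j [2^{-j} ∑_d 2^{d/2} ∥f∥_{L²(A_j ∩ B_d)}]²)^{1/2}`
(denoted `X̂^{-1,1/2,1}` in the paper). -/
def Xnorm (f : ℝ × ℝ → ℂ) : ℝ≥0∞ :=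
  (∑' j : ℕ, ((2 : ℝ≥0∞) ^ (-(j : ℝ)) *
      ∑' d : ℕ, (2 : ℝ≥0∞) ^ ((d : ℝ) / 2) * L2On f (Aset j ∩ Bset d)) ^ 2) ^ (1 / 2 : ℝ)

/-- The norm `∥f∥_Y = ∥⟨ξ⟩^{-1} f∥_{L²_ξ L¹_τ} + ∥f∥_{L²_ξ L²_τ}`. -/
def Ynorm (f : ℝ × ℝ → ℂ) : ℝ≥0∞ := L2L1w f + L2 f

/-- The sum-space norm `∥f∥_Z = inf {∥f₁∥_X + ∥f₂∥_Y : f = f₁ + f₂}`. -/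
def Znorm (f : ℝ × ℝ → ℂ) : ℝ≥0∞ :=
  ⨅ g : ℝ × ℝ → ℂ, Xnorm g + Ynorm (fun p => f p - g p)

/-- The weight `w(τ,ξ) = max(1,-τ)^{10}` localizing to the upper half-plane. -/
def wfun (p : ℝ × ℝ) : ℝ := max 1 (-p.1) ^ 10

/-- The norm `∥f∥_W = ∥w f∥_Z`. -/
def Wnorm (f : ℝ × ℝ → ℂ) : ℝ≥0∞ := Znorm (fun p => (wfun p : ℂ) * f p)

/-- Spacetime convolution `(f*g)(τ,ξ) = ∫∫ f(τ₁,ξ₁) g(τ-τ₁, ξ-ξ₁) dτ₁ dξ₁`. -/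
def conv (f g : ℝ × ℝ → ℂ) (p : ℝ × ℝ) : ℂ := ∫ q : ℝ × ℝ, f q * g (p - q)

/-- The (Fourier side) `X^{s,b}` norm `∥⟨ξ⟩^s ⟨τ-ξ²⟩^b f∥_{L²_τ L²_ξ}`. -/
def XsbNorm (s b : ℝ) (f : ℝ × ℝ → ℂ) : ℝ≥0∞ :=
  (∫⁻ p : ℝ × ℝ,
    (ENNReal.ofReal (jap p.2 ^ s * jap (p.1 - p.2 ^ 2) ^ b) * (‖f p‖₊ : ℝ≥0∞)) ^ 2) ^ (1 / 2 : ℝ)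

/-- The bilinear-type expression `(w/⟨τ-ξ²⟩)·((f/w) * (g/w))`. -/
def Kop (f g : ℝ × ℝ → ℂ) : ℝ × ℝ → ℂ := fun p =>
  ((wfun p / jap (p.1 - p.2 ^ 2) : ℝ) : ℂ) *
    conv (fun q => f q / (wfun q : ℂ)) (fun q => g q / (wfun q : ℂ)) p

section Aux

lemma jap_pos (x : ℝ) : 0 < jap x := Real.sqrt_pos.2 (by positivity)

lemma one_le_jap (x : ℝ) : 1 ≤ jap x := by
  rw [show (1:ℝ) = Real.sqrt 1 from Real.sqrt_one.symm, jap]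
  exact Real.sqrt_le_sqrt (by nlinarith [sq_nonneg x])

lemma abs_le_jap (x : ℝ) : |x| ≤ jap x := by
  rw [← Real.sqrt_sq_eq_abs, jap]
  exact Real.sqrt_le_sqrt (by nlinarith)

lemma continuous_jap : Continuous jap :=
  Real.continuous_sqrt.comp (by continuity)

lemma continuous_parab : Continuous fun p : ℝ × ℝ => p.1 - p.2 ^ 2 :=
  continuous_fst.sub ((continuous_snd).pow 2)

lemma measurable_japB : Measurable fun p : ℝ × ℝ => jap (p.1 - p.2 ^ 2) :=
  (continuous_jap.comp continuous_parab).measurable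

lemma measurableSet_Bset (d : ℕ) : MeasurableSet (Bset d) := by
  rw [Bset, Set.setOf_and]
  exact (measurableSet_le measurable_const measurable_japB).inter
    (measurableSet_lt measurable_japB measurable_const)

lemma exists_dyadic {x : ℝ} (hx : 1 ≤ x) : ∃ d : ℕ, (2:ℝ)^d ≤ x ∧ x < 2^(d+1) := by
  have hfl : 1 ≤ ⌊x⌋₊ := Nat.le_floor (by exact_mod_cast hx)
  refine ⟨Nat.log 2 ⌊x⌋₊, ?_, ?_⟩
  · calc (2:ℝ) ^ Nat.log 2 ⌊x⌋₊ = ((2 ^ Nat.log 2 ⌊x⌋₊ : ℕ) : ℝ) := by push_cast; ring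
      _ ≤ (⌊x⌋₊ : ℝ) := by exact_mod_cast Nat.pow_log_le_self 2 (by omega)
      _ ≤ x := Nat.floor_le (by linarith)
  · have h2 : ⌊x⌋₊ < 2 ^ (Nat.log 2 ⌊x⌋₊ + 1) := Nat.lt_pow_succ_log_self one_lt_two _
    have h3 : (⌊x⌋₊ : ℝ) + 1 ≤ ((2:ℕ) : ℝ) ^ (Nat.log 2 ⌊x⌋₊ + 1) := by
      exact_mod_cast Nat.succ_le_of_lt h2
    have h4 := Nat.lt_floor_add_one x
    push_cast at h3
    linarith

lemma Bset_disjoint {d d' : ℕ} (h : d ≠ d') {p : ℝ × ℝ} (h1 : p ∈ Bset d) : p ∉ Bset d' := by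
  intro h2
  rcases h.lt_or_gt with hlt | hlt
  · have : (2:ℝ) ^ (d+1) ≤ 2 ^ d' := pow_le_pow_right₀ one_le_two (by omega)
    exact absurd (lt_of_lt_of_le h1.2 this) (not_lt.2 h2.1)
  · have : (2:ℝ) ^ (d'+1) ≤ 2 ^ d := pow_le_pow_right₀ one_le_two (by omega)
    exact absurd (lt_of_lt_of_le h2.2 this) (not_lt.2 h1.1)

lemma exists_decomp {f : ℝ × ℝ → ℂ} (hf : HasCompactSupport f) :
    ∃ N : ℕ, ∀ q, (‖f q‖₊ : ℝ≥0∞) = ∑ d ∈ Finset.range N, (‖(Bset d).indicator f q‖₊ : ℝ≥0∞) := by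
  obtain ⟨M, hM⟩ : ∃ M : ℝ, ∀ p ∈ tsupport f, jap (p.1 - p.2 ^ 2) ≤ M := by
    have hK : IsCompact (tsupport f) := hf
    obtain ⟨M, hM⟩ := (hK.image (continuous_jap.comp continuous_parab)).bddAbove
    exact ⟨M, fun p hp => hM (Set.mem_image_of_mem _ hp)⟩
  obtain ⟨N, hN⟩ := pow_unbounded_of_one_lt M one_lt_two
  refine ⟨N, fun q => ?_⟩
  by_cases hq : f q = 0
  · rw [hq, nnnorm_zero, ENNReal.coe_zero]
    symm
    apply Finset.sum_eq_zero
    intro d _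
    simp [Set.indicator_apply, hq]
  · have hq1 : 1 ≤ jap (q.1 - q.2 ^ 2) := one_le_jap _
    obtain ⟨d₀, hd₀⟩ := exists_dyadic hq1
    have hmem : q ∈ Bset d₀ := ⟨hd₀.1, hd₀.2⟩
    have hd₀N : d₀ < N := by
      have h5 : (2:ℝ) ^ d₀ ≤ M := le_trans hd₀.1 (hM q (subset_tsupport f hq))
      have h6 : (2:ℝ) ^ d₀ < 2 ^ N := lt_of_le_of_lt h5 hN
      exact pow_lt_pow_iff_right₀ one_lt_two |>.1 h6
    rw [Finset.sum_eq_single d₀]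
    · rw [Set.indicator_of_mem hmem]
    · intro d _ hne
      rw [Set.indicator_of_notMem (Bset_disjoint (Ne.symm hne) hmem), nnnorm_zero, ENNReal.coe_zero]
    · intro h; exact absurd (Finset.mem_range.2 hd₀N) h

end Aux
section OneD

lemma sqrt_add_le' (a s : ℝ) (hs : 0 ≤ s) : Real.sqrt (a + s) ≤ Real.sqrt a + Real.sqrt s := by
  rcases le_or_gt a 0 with ha | ha
  · calc Real.sqrt (a + s) ≤ Real.sqrt s := Real.sqrt_le_sqrt (by linarith)
      _ ≤ Real.sqrt a + Real.sqrt s := by linarith [Real.sqrt_nonneg a]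
  · have h1 : a + s ≤ (Real.sqrt a + Real.sqrt s) ^ 2 := by
      have h2 := Real.sq_sqrt ha.le
      have h3 := Real.sq_sqrt hs
      nlinarith [Real.sqrt_nonneg a, Real.sqrt_nonneg s]
    calc Real.sqrt (a + s) ≤ Real.sqrt ((Real.sqrt a + Real.sqrt s) ^ 2) := Real.sqrt_le_sqrt h1
      _ = Real.sqrt a + Real.sqrt s := Real.sqrt_sq (by positivity)

lemma quad_diff_le_sqrt (e s D : ℝ) (hs : 0 ≤ s) :
    Real.sqrt ((s - e)/2) - Real.sqrt (max ((-s - e)/2) (D^2/4)) ≤ Real.sqrt s := by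
  have h1 : Real.sqrt ((-s - e)/2) ≤ Real.sqrt (max ((-s - e)/2) (D^2/4)) :=
    Real.sqrt_le_sqrt (le_max_left _ _)
  have h2 : Real.sqrt ((s - e)/2) ≤ Real.sqrt ((-s - e)/2) + Real.sqrt s := by
    rw [show (s - e)/2 = (-s - e)/2 + s by ring]
    exact sqrt_add_le' _ _ hs
  linarith

lemma quad_diff_le_div (e s D : ℝ) (hs : 0 ≤ s) (hD : 0 < D) :
    Real.sqrt ((s - e)/2) - Real.sqrt (max ((-s - e)/2) (D^2/4)) ≤ s / D := by
  set β := (s - e)/2 with hβ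
  set m := Real.sqrt (max ((-s - e)/2) (D^2/4)) with hm
  rcases le_or_gt (Real.sqrt β) m with h | h
  · have : (0:ℝ) ≤ s / D := by positivity
    linarith
  · have hm0 : 0 ≤ m := Real.sqrt_nonneg _
    have hsβ : 0 < Real.sqrt β := lt_of_le_of_lt hm0 h
    have hβpos : 0 < β := Real.sqrt_pos.1 hsβ
    have hmax0 : (0:ℝ) ≤ max ((-s - e)/2) (D^2/4) := le_max_of_le_right (by positivity)
    have hm2 : m^2 = max ((-s - e)/2) (D^2/4) := Real.sq_sqrt hmax0
    have hβ2 : (Real.sqrt β)^2 = β := Real.sq_sqrt hβpos.le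
    have hmD : D/2 ≤ m := by
      rw [hm]
      calc D/2 = Real.sqrt ((D/2)^2) := (Real.sqrt_sq (by positivity)).symm
        _ = Real.sqrt (D^2/4) := by ring_nf
        _ ≤ _ := Real.sqrt_le_sqrt (le_max_right _ _)
    have hDsum : D ≤ Real.sqrt β + m := by linarith
    have hnum : β - m^2 ≤ s := by
      have h4 : (-s - e)/2 ≤ m^2 := hm2 ▸ le_max_left _ _
      have h5 : β - (-s - e)/2 = s := by rw [hβ]; ring
      linarith
    have key : (Real.sqrt β - m) * D ≤ s := by
      calc (Real.sqrt β - m) * D ≤ (Real.sqrt β - m) * (Real.sqrt β + m) :=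
            mul_le_mul_of_nonneg_left hDsum (by linarith)
        _ = β - m^2 := by
            rw [show (Real.sqrt β - m) * (Real.sqrt β + m) = (Real.sqrt β)^2 - m^2 by ring, hβ2]
        _ ≤ s := hnum
    rw [le_div_iff₀ hD]
    exact key

lemma volume_quad_le (e s D B : ℝ) (hD : 0 ≤ D) (hB : 0 ≤ B)
    (hB1 : Real.sqrt ((s - e)/2) - Real.sqrt (max ((-s - e)/2) (D^2/4)) ≤ B) :
    volume {u : ℝ | |2*u^2 + e| ≤ s ∧ D ≤ 2*|u|} ≤ ENNReal.ofReal (2*B) := by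
  set β := (s - e)/2 with hβdef
  set m := Real.sqrt (max ((-s - e)/2) (D^2/4)) with hmdef
  have hsub : {u : ℝ | |2*u^2 + e| ≤ s ∧ D ≤ 2*|u|} ⊆
      Set.Icc (-(Real.sqrt β)) (-m) ∪ Set.Icc m (Real.sqrt β) := by
    rintro u ⟨h1, h2⟩
    rw [abs_le] at h1
    have hu2β : u^2 ≤ β := by rw [hβdef]; linarith [h1.2]
    have huβ : |u| ≤ Real.sqrt β := by
      rw [← Real.sqrt_sq_eq_abs]; exact Real.sqrt_le_sqrt hu2β
    have hum : m ≤ |u| := by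
      have h3 : max ((-s - e)/2) (D^2/4) ≤ u^2 := by
        apply max_le
        · linarith [h1.1]
        · nlinarith [sq_abs u, abs_nonneg u, sq_nonneg (2*|u| - D)]
      calc m ≤ Real.sqrt (u^2) := Real.sqrt_le_sqrt h3
        _ = |u| := Real.sqrt_sq_eq_abs u
    rcases le_or_gt 0 u with h | h
    · right
      rw [abs_of_nonneg h] at hum huβ
      exact ⟨hum, huβ⟩
    · left
      rw [abs_of_neg h] at hum huβ
      exact ⟨by linarith, by linarith⟩
  calc volume {u : ℝ | |2*u^2 + e| ≤ s ∧ D ≤ 2*|u|}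
      ≤ volume (Set.Icc (-(Real.sqrt β)) (-m)) + volume (Set.Icc m (Real.sqrt β)) :=
        le_trans (measure_mono hsub) (measure_union_le _ _)
    _ ≤ ENNReal.ofReal (2*B) := by
        rw [Real.volume_Icc, Real.volume_Icc]
        have h1 : -m - -(Real.sqrt β) ≤ B := by linarith
        have h2 : Real.sqrt β - m ≤ B := hB1
        calc ENNReal.ofReal (-m - -(Real.sqrt β)) + ENNReal.ofReal (Real.sqrt β - m)
            ≤ ENNReal.ofReal B + ENNReal.ofReal B :=
              add_le_add (ENNReal.ofReal_le_ofReal h1) (ENNReal.ofReal_le_ofReal h2)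
          _ = ENNReal.ofReal (2*B) := by
              rw [← ENNReal.ofReal_add hB hB]; ring_nf

end OneD
section MeasE

lemma one_le_twopow {k : ℕ} : (1:ℝ) ≤ 2 ^ k := one_le_pow₀ one_le_two

lemma jap_le_two {D : ℝ} (hD1 : D ≤ 1) (hD : 0 ≤ D) : jap D ≤ 2 := by
  rw [jap]
  calc Real.sqrt (1 + D^2) ≤ Real.sqrt 4 := Real.sqrt_le_sqrt (by nlinarith)
    _ = 2 := by rw [show (4:ℝ) = 2^2 by norm_num, Real.sqrt_sq (by norm_num)]

lemma jap_le_twoD {D : ℝ} (hD1 : 1 ≤ D) : jap D ≤ 2 * D := by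
  rw [jap]
  calc Real.sqrt (1 + D^2) ≤ Real.sqrt ((2*D)^2) := Real.sqrt_le_sqrt (by nlinarith)
    _ = 2*D := Real.sqrt_sq (by linarith)

lemma measE (d₁ d₂ : ℕ) (D : ℝ) (hD : 0 ≤ D) (p : ℝ × ℝ) :
    volume {q : ℝ × ℝ | q ∈ Bset d₁ ∧ p - q ∈ Bset d₂ ∧ D ≤ |2*q.2 - p.2|}
      ≤ ENNReal.ofReal ((2:ℝ)^(d₁+d₂+7) / jap D) := by
  set R₁ : ℝ := 2^(d₁+1) with hR₁
  set R₂ : ℝ := 2^(d₂+1) with hR₂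
  set s : ℝ := R₁ + R₂ with hs
  set e : ℝ := p.2^2/2 - p.1 with he
  set Sξ : Set ℝ := {x | |2*(x - p.2/2)^2 + e| ≤ s ∧ D ≤ 2*|x - p.2/2|} with hSξ
  set E' : Set (ℝ × ℝ) :=
    {q | |q.1 - q.2^2| ≤ R₁ ∧ |p.1 - q.1 - (p.2 - q.2)^2| ≤ R₂ ∧ D ≤ |2*q.2 - p.2|} with hE'def
  have hR₁1 : (1:ℝ) ≤ R₁ := one_le_twopow
  have hR₂1 : (1:ℝ) ≤ R₂ := one_le_twopow
  have hs0 : (0:ℝ) ≤ s := by rw [hs]; linarith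
  -- E ⊆ E'
  have hEsub : {q : ℝ × ℝ | q ∈ Bset d₁ ∧ p - q ∈ Bset d₂ ∧ D ≤ |2*q.2 - p.2|} ⊆ E' := by
    rintro q ⟨h1, h2, h3⟩
    refine ⟨?_, ?_, h3⟩
    · exact le_of_lt (lt_of_le_of_lt (abs_le_jap _) h1.2)
    · have h4 := lt_of_le_of_lt (abs_le_jap ((p - q).1 - (p - q).2^2)) h2.2
      simpa using h4.le
  -- measurability
  have m1 : Measurable fun q : ℝ × ℝ => |q.1 - q.2^2| :=
    (measurable_fst.sub (measurable_snd.pow_const 2)).abs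
  have m2 : Measurable fun q : ℝ × ℝ => |p.1 - q.1 - (p.2 - q.2)^2| :=
    ((measurable_const.sub measurable_fst).sub
      ((measurable_const.sub measurable_snd).pow_const 2)).abs
  have m3 : Measurable fun q : ℝ × ℝ => |2*q.2 - p.2| :=
    ((measurable_snd.const_mul 2).sub measurable_const).abs
  have hE' : MeasurableSet E' := by
    rw [hE'def, Set.setOf_and, Set.setOf_and]
    exact (measurableSet_le m1 measurable_const).inter
      ((measurableSet_le m2 measurable_const).inter
        (measurableSet_le measurable_const m3))
  have hSm : MeasurableSet Sξ := by
    rw [hSξ, Set.setOf_and]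
    have m4 : Measurable fun x : ℝ => |2*(x - p.2/2)^2 + e| :=
      ((((measurable_id.sub measurable_const).pow_const 2).const_mul 2).add measurable_const).abs
    have m5 : Measurable fun x : ℝ => 2*|x - p.2/2| :=
      ((measurable_id.sub measurable_const).abs.const_mul 2)
    exact (measurableSet_le m4 measurable_const).inter
      (measurableSet_le measurable_const m5)
  -- sections
  have hsec : ∀ x : ℝ, volume ((fun t => (t, x)) ⁻¹' E')
      ≤ Sξ.indicator (fun _ => ENNReal.ofReal (2 * min R₁ R₂)) x := by
    intro x
    by_cases hx : x ∈ Sξ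
    · rw [Set.indicator_of_mem hx]
      have hsub1 : ((fun t => (t, x)) ⁻¹' E') ⊆ Set.Icc (x^2 - R₁) (x^2 + R₁) := by
        rintro t ⟨h1, _, _⟩
        rw [abs_le] at h1
        constructor <;> [linarith [h1.1]; linarith [h1.2]]
      have hsub2 : ((fun t => (t, x)) ⁻¹' E') ⊆
          Set.Icc (p.1 - (p.2 - x)^2 - R₂) (p.1 - (p.2 - x)^2 + R₂) := by
        rintro t ⟨_, h2, _⟩
        rw [abs_le] at h2
        constructor <;> [linarith [h2.2]; linarith [h2.1]]
      rcases le_total R₁ R₂ with hmin | hmin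
      · rw [min_eq_left hmin]
        calc volume ((fun t => (t, x)) ⁻¹' E') ≤ volume (Set.Icc (x^2 - R₁) (x^2 + R₁)) :=
              measure_mono hsub1
          _ = ENNReal.ofReal (2 * R₁) := by rw [Real.volume_Icc]; ring_nf
          _ ≤ _ := le_refl _
      · rw [min_eq_right hmin]
        calc volume ((fun t => (t, x)) ⁻¹' E')
            ≤ volume (Set.Icc (p.1 - (p.2 - x)^2 - R₂) (p.1 - (p.2 - x)^2 + R₂)) :=
              measure_mono hsub2
          _ = ENNReal.ofReal (2 * R₂) := by rw [Real.volume_Icc]; ring_nf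
          _ ≤ _ := le_refl _
    · rw [Set.indicator_of_notMem hx]
      have : ((fun t => (t, x)) ⁻¹' E') = ∅ := by
        rw [Set.eq_empty_iff_forall_notMem]
        rintro t ⟨h1, h2, h3⟩
        apply hx
        constructor
        · have key : 2*(x - p.2/2)^2 + e = -((t - x^2) + (p.1 - t - (p.2 - x)^2)) := by
            rw [he]; ring
          rw [key, abs_neg]
          calc |(t - x^2) + (p.1 - t - (p.2 - x)^2)|
              ≤ |t - x^2| + |p.1 - t - (p.2 - x)^2| := abs_add_le _ _
            _ ≤ R₁ + R₂ := add_le_add h1 h2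
        · have key2 : 2*x - p.2 = 2*(x - p.2/2) := by ring
          rw [key2, abs_mul] at h3
          simpa using h3
      rw [this]
      simp
  -- put it together
  have hvol : volume E' ≤ ENNReal.ofReal (2 * min R₁ R₂) * volume Sξ := by
    rw [MeasureTheory.Measure.volume_eq_prod ℝ ℝ, MeasureTheory.Measure.prod_apply_symm hE']
    calc ∫⁻ x, volume ((fun t => (t, x)) ⁻¹' E') ≤
        ∫⁻ x, Sξ.indicator (fun _ => ENNReal.ofReal (2 * min R₁ R₂)) x :=
          MeasureTheory.lintegral_mono hsec
      _ = ENNReal.ofReal (2 * min R₁ R₂) * volume Sξ :=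
          MeasureTheory.lintegral_indicator_const hSm _
  -- volume of Sξ
  have hSvol : ∀ B : ℝ, 0 ≤ B →
      (Real.sqrt ((s - e)/2) - Real.sqrt (max ((-s - e)/2) (D^2/4)) ≤ B) →
      volume Sξ ≤ ENNReal.ofReal (2*B) := by
    intro B hB0 hB1
    have hpre : Sξ = (fun x => x - p.2/2) ⁻¹' {u : ℝ | |2*u^2 + e| ≤ s ∧ D ≤ 2*|u|} := rfl
    have hT : MeasurableSet {u : ℝ | |2*u^2 + e| ≤ s ∧ D ≤ 2*|u|} := by
      rw [Set.setOf_and]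
      exact (measurableSet_le (((measurable_id.pow_const 2).const_mul 2).add
          measurable_const).abs measurable_const).inter
        (measurableSet_le measurable_const (measurable_id.abs.const_mul 2))
    rw [hpre, (measurePreserving_sub_right volume (p.2/2)).measure_preimage
      hT.nullMeasurableSet]
    exact volume_quad_le e s D B hD hB0 hB1
  -- final arithmetic
  have hmin0 : (0:ℝ) ≤ min R₁ R₂ := le_min (by linarith) (by linarith)
  have hminmul : min R₁ R₂ * s ≤ 2 * (R₁ * R₂) := by
    rcases le_total R₁ R₂ with h | h
    · rw [min_eq_left h]; nlinarith
    · rw [min_eq_right h]; nlinarith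
  have hP : R₁ * R₂ = 2^(d₁+d₂+2) := by
    rw [hR₁, hR₂, ← pow_add]
    congr 1
    omega
  have hpow7 : (2:ℝ)^(d₁+d₂+7) = 32 * 2^(d₁+d₂+2) := by
    rw [show d₁+d₂+7 = (d₁+d₂+2)+5 by omega, pow_add]
    ring
  have hjap0 : (0:ℝ) < jap D := jap_pos D
  rcases le_or_gt D 1 with hD1 | hD1
  · -- use B = √s
    have hfin : ENNReal.ofReal (2 * min R₁ R₂) * ENNReal.ofReal (2 * Real.sqrt s)
        ≤ ENNReal.ofReal ((2:ℝ)^(d₁+d₂+7) / jap D) := by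
      rw [← ENNReal.ofReal_mul (by positivity)]
      apply ENNReal.ofReal_le_ofReal
      rw [le_div_iff₀ hjap0]
      have hsqs : Real.sqrt s ≤ s := by
        calc Real.sqrt s ≤ Real.sqrt (s^2) := Real.sqrt_le_sqrt (by nlinarith)
          _ = s := Real.sqrt_sq hs0
      have hj2 : jap D ≤ 2 := jap_le_two hD1 hD
      have h0s : 0 ≤ Real.sqrt s := Real.sqrt_nonneg s
      rw [hpow7]
      nlinarith [mul_nonneg hmin0 h0s, mul_le_mul_of_nonneg_left hsqs hmin0,
        mul_nonneg hmin0 hs0, mul_nonneg (mul_nonneg hmin0 h0s) hjap0.le]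
    calc volume {q : ℝ × ℝ | q ∈ Bset d₁ ∧ p - q ∈ Bset d₂ ∧ D ≤ |2*q.2 - p.2|}
        ≤ volume E' := measure_mono hEsub
      _ ≤ ENNReal.ofReal (2 * min R₁ R₂) * volume Sξ := hvol
      _ ≤ ENNReal.ofReal (2 * min R₁ R₂) * ENNReal.ofReal (2 * Real.sqrt s) := by
          exact mul_le_mul_right (hSvol _ (Real.sqrt_nonneg s) (quad_diff_le_sqrt e s D hs0)) _
      _ ≤ _ := hfin
  · -- use B = s / D
    have hD0 : (0:ℝ) < D := by linarith
    have hfin : ENNReal.ofReal (2 * min R₁ R₂) * ENNReal.ofReal (2 * (s/D))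
        ≤ ENNReal.ofReal ((2:ℝ)^(d₁+d₂+7) / jap D) := by
      rw [← ENNReal.ofReal_mul (by positivity)]
      apply ENNReal.ofReal_le_ofReal
      rw [le_div_iff₀ hjap0]
      have hj2 : jap D ≤ 2 * D := jap_le_twoD hD1.le
      have hdiv : s / D * jap D ≤ 2 * s := by
        rw [div_mul_eq_mul_div, div_le_iff₀ hD0]
        nlinarith
      have hdiv0 : (0:ℝ) ≤ s / D := by positivity
      rw [hpow7]
      nlinarith [mul_le_mul_of_nonneg_left hdiv hmin0, mul_nonneg hmin0 hdiv0,
        mul_nonneg hmin0 hs0]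
    calc volume {q : ℝ × ℝ | q ∈ Bset d₁ ∧ p - q ∈ Bset d₂ ∧ D ≤ |2*q.2 - p.2|}
        ≤ volume E' := measure_mono hEsub
      _ ≤ ENNReal.ofReal (2 * min R₁ R₂) * volume Sξ := hvol
      _ ≤ ENNReal.ofReal (2 * min R₁ R₂) * ENNReal.ofReal (2 * (s/D)) := by
          exact mul_le_mul_right (hSvol _ (by positivity) (quad_diff_le_div e s D hs0 hD0)) _
      _ ≤ _ := hfin
end MeasE
section Core

lemma L2_eq (f : ℝ × ℝ → ℂ) :
    L2 f = (∫⁻ p : ℝ × ℝ, ((‖f p‖₊ : ℝ≥0∞)) ^ (2:ℝ)) ^ (1/2:ℝ) := by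
  rw [L2]
  congr 1
  apply lintegral_congr
  intro p
  rw [← ENNReal.rpow_natCast ((‖f p‖₊ : ℝ≥0∞)) 2]
  norm_num

lemma lintegral_Lp_sum_le {ι : Type*} [DecidableEq ι] (s : Finset ι) (h : ι → ℝ × ℝ → ℝ≥0∞)
    (hm : ∀ i, Measurable (h i)) :
    (∫⁻ p : ℝ × ℝ, (∑ i ∈ s, h i p) ^ (2:ℝ)) ^ (1/2:ℝ)
      ≤ ∑ i ∈ s, (∫⁻ p : ℝ × ℝ, h i p ^ (2:ℝ)) ^ (1/2:ℝ) := by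
  induction s using Finset.induction with
  | empty => simp
  | insert a s' ha ih =>
    simp only [Finset.sum_insert ha]
    have hsum : Measurable fun p => ∑ i ∈ s', h i p :=
      Finset.measurable_sum s' (fun i _ => hm i)
    have key := ENNReal.lintegral_Lp_add_le (μ := volume)
      (hm a).aemeasurable hsum.aemeasurable (one_le_two : (1:ℝ) ≤ 2)
    simp only [Pi.add_apply] at key
    exact le_trans key (add_le_add_right ih _)

lemma core_pair (d₁ d₂ : ℕ) (D : ℝ) (hD : 0 ≤ D) (f g : ℝ × ℝ → ℂ)
    (hfm : Measurable f) (hgm : Measurable g)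
    (hsep : ∀ p q : ℝ × ℝ, f p ≠ 0 → g q ≠ 0 → D ≤ |p.2 - q.2|) :
    (∫⁻ p : ℝ × ℝ, (∫⁻ q : ℝ × ℝ, (‖(Bset d₁).indicator f q‖₊ : ℝ≥0∞) *
        (‖(Bset d₂).indicator g (p - q)‖₊ : ℝ≥0∞)) ^ (2:ℝ)) ^ (1/2:ℝ)
      ≤ ENNReal.ofReal (Real.sqrt ((2:ℝ)^(d₁+d₂+7) / jap D)) *
        L2 ((Bset d₁).indicator f) * L2 ((Bset d₂).indicator g) := by
  set F := (Bset d₁).indicator f with hF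
  set G := (Bset d₂).indicator g with hG
  have hFm : Measurable F := hfm.indicator (measurableSet_Bset d₁)
  have hGm : Measurable G := hgm.indicator (measurableSet_Bset d₂)
  set a : ℝ × ℝ → ℝ≥0∞ := fun q => (‖F q‖₊ : ℝ≥0∞) with ha
  set b : ℝ × ℝ → ℝ≥0∞ := fun q => (‖G q‖₊ : ℝ≥0∞) with hb
  have ham : Measurable a := hFm.enorm
  have hbm : Measurable b := hGm.enorm
  set E : (ℝ × ℝ) → Set (ℝ × ℝ) :=
    fun p => {q : ℝ × ℝ | q ∈ Bset d₁ ∧ p - q ∈ Bset d₂ ∧ D ≤ |2*q.2 - p.2|} with hE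
  have hEm : ∀ p, MeasurableSet (E p) := by
    intro p
    rw [hE]
    simp only [Set.setOf_and]
    refine (measurableSet_Bset d₁).inter
      (((measurable_const.sub measurable_id) (measurableSet_Bset d₂)).inter ?_)
    exact measurableSet_le measurable_const
      ((measurable_snd.const_mul 2).sub measurable_const).abs
  set K : ℝ≥0∞ := ENNReal.ofReal ((2:ℝ)^(d₁+d₂+7) / jap D) with hK
  -- pointwise support
  have hptwise : ∀ p q : ℝ × ℝ, a q * b (p - q) =
      (E p).indicator (fun q => a q * b (p - q)) q := by
    intro p q
    by_cases hq : q ∈ E p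
    · rw [Set.indicator_of_mem hq]
    · rw [Set.indicator_of_notMem hq]
      by_cases h1 : q ∈ Bset d₁
      swap
      · have hz : F q = 0 := Set.indicator_of_notMem h1 f
        simp [ha, hz]
      by_cases h2 : p - q ∈ Bset d₂
      swap
      · have hz : G (p - q) = 0 := Set.indicator_of_notMem h2 g
        simp [hb, hz]
      have h3 : ¬ D ≤ |2*q.2 - p.2| := fun h => hq ⟨h1, h2, h⟩
      by_cases hf0 : f q = 0
      · have hz : F q = 0 := by simp [hF, Set.indicator_apply, hf0]
        simp [ha, hz]
      by_cases hg0 : g (p - q) = 0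
      · have hz : G (p - q) = 0 := by simp [hG, Set.indicator_apply, hg0]
        simp [hb, hz]
      exfalso
      have h4 := hsep q (p - q) hf0 hg0
      apply h3
      have h5 : (p - q).2 = p.2 - q.2 := rfl
      rwa [h5, show q.2 - (p.2 - q.2) = 2*q.2 - p.2 by ring] at h4
  have hconj : Real.HolderConjugate 2 2 := Real.holderConjugate_iff.mpr ⟨one_lt_two, by norm_num⟩
  -- Cauchy-Schwarz
  have CS : ∀ p : ℝ × ℝ, (∫⁻ q : ℝ × ℝ, a q * b (p - q)) ≤
      (volume (E p)) ^ (1/2:ℝ) * (∫⁻ q : ℝ × ℝ, (a q * b (p - q)) ^ (2:ℝ)) ^ (1/2:ℝ) := by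
    intro p
    have habm : Measurable fun q : ℝ × ℝ => a q * b (p - q) :=
      ham.mul (hbm.comp (measurable_const.sub measurable_id))
    have key := ENNReal.lintegral_mul_le_Lp_mul_Lq (volume.restrict (E p)) hconj
      (aemeasurable_const (b := (1:ℝ≥0∞))) habm.aemeasurable
    simp only [Pi.mul_apply, one_mul, ENNReal.one_rpow, lintegral_one,
      Measure.restrict_apply_univ] at key
    calc (∫⁻ q : ℝ × ℝ, a q * b (p - q))
        = ∫⁻ q in E p, a q * b (p - q) := by
          rw [← MeasureTheory.lintegral_indicator (hEm p)]
          exact lintegral_congr (hptwise p)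
      _ ≤ (volume (E p)) ^ (1/2:ℝ) * (∫⁻ q in E p, (a q * b (p - q)) ^ (2:ℝ)) ^ (1/2:ℝ) := key
      _ ≤ (volume (E p)) ^ (1/2:ℝ) * (∫⁻ q : ℝ × ℝ, (a q * b (p - q)) ^ (2:ℝ)) ^ (1/2:ℝ) := by
          gcongr
          exact Measure.restrict_le_self
  -- squared bound
  have step2 : ∀ p : ℝ × ℝ, (∫⁻ q : ℝ × ℝ, a q * b (p - q)) ^ (2:ℝ) ≤
      K * ∫⁻ q : ℝ × ℝ, (a q) ^ (2:ℝ) * (b (p - q)) ^ (2:ℝ) := by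
    intro p
    calc (∫⁻ q : ℝ × ℝ, a q * b (p - q)) ^ (2:ℝ)
        ≤ ((volume (E p)) ^ (1/2:ℝ) *
            (∫⁻ q : ℝ × ℝ, (a q * b (p - q)) ^ (2:ℝ)) ^ (1/2:ℝ)) ^ (2:ℝ) :=
          ENNReal.rpow_le_rpow (CS p) (by norm_num)
      _ = volume (E p) * ∫⁻ q : ℝ × ℝ, (a q * b (p - q)) ^ (2:ℝ) := by
          rw [ENNReal.mul_rpow_of_nonneg _ _ (by norm_num : (0:ℝ) ≤ 2),
            ← ENNReal.rpow_mul, ← ENNReal.rpow_mul]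
          norm_num
      _ ≤ K * ∫⁻ q : ℝ × ℝ, (a q * b (p - q)) ^ (2:ℝ) :=
          mul_le_mul_left (measE d₁ d₂ D hD p) _
      _ = K * ∫⁻ q : ℝ × ℝ, (a q) ^ (2:ℝ) * (b (p - q)) ^ (2:ℝ) := by
          congr 1
          exact lintegral_congr fun q => ENNReal.mul_rpow_of_nonneg _ _ (by norm_num)
  -- integrate in p
  have step3 : (∫⁻ p : ℝ × ℝ, (∫⁻ q : ℝ × ℝ, a q * b (p - q)) ^ (2:ℝ))
      ≤ K * ((∫⁻ q : ℝ × ℝ, (a q) ^ (2:ℝ)) * (∫⁻ q : ℝ × ℝ, (b q) ^ (2:ℝ))) := by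
    calc (∫⁻ p : ℝ × ℝ, (∫⁻ q : ℝ × ℝ, a q * b (p - q)) ^ (2:ℝ))
        ≤ ∫⁻ p : ℝ × ℝ, K * ∫⁻ q : ℝ × ℝ, (a q) ^ (2:ℝ) * (b (p - q)) ^ (2:ℝ) :=
          lintegral_mono step2
      _ = K * ∫⁻ p : ℝ × ℝ, ∫⁻ q : ℝ × ℝ, (a q) ^ (2:ℝ) * (b (p - q)) ^ (2:ℝ) :=
          lintegral_const_mul' K _ ENNReal.ofReal_ne_top
      _ = K * ∫⁻ q : ℝ × ℝ, ∫⁻ p : ℝ × ℝ, (a q) ^ (2:ℝ) * (b (p - q)) ^ (2:ℝ) := by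
          congr 1
          apply MeasureTheory.lintegral_lintegral_swap
          apply Measurable.aemeasurable
          exact ((ham.comp measurable_snd).pow_const _).mul
            ((hbm.comp (measurable_fst.sub measurable_snd)).pow_const _)
      _ = K * ((∫⁻ q : ℝ × ℝ, (a q) ^ (2:ℝ)) * (∫⁻ q : ℝ × ℝ, (b q) ^ (2:ℝ))) := by
          congr 1
          calc ∫⁻ q : ℝ × ℝ, ∫⁻ p : ℝ × ℝ, (a q) ^ (2:ℝ) * (b (p - q)) ^ (2:ℝ)
              = ∫⁻ q : ℝ × ℝ, (a q) ^ (2:ℝ) * ∫⁻ p : ℝ × ℝ, (b (p - q)) ^ (2:ℝ) := by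
                apply lintegral_congr
                intro q
                exact lintegral_const_mul'' _ ((hbm.comp
                  (measurable_id.sub measurable_const)).pow_const _).aemeasurable
            _ = ∫⁻ q : ℝ × ℝ, (a q) ^ (2:ℝ) * ∫⁻ p : ℝ × ℝ, (b p) ^ (2:ℝ) := by
                apply lintegral_congr
                intro q
                congr 1
                exact (measurePreserving_sub_right volume q).lintegral_comp
                  (hbm.pow_const _)
            _ = (∫⁻ q : ℝ × ℝ, (a q) ^ (2:ℝ)) * ∫⁻ p : ℝ × ℝ, (b p) ^ (2:ℝ) :=
                lintegral_mul_const _ (ham.pow_const _)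
  -- conclude
  have hpos : (0:ℝ) < (2:ℝ)^(d₁+d₂+7) / jap D := div_pos (by positivity) (jap_pos D)
  calc (∫⁻ p : ℝ × ℝ, (∫⁻ q : ℝ × ℝ, a q * b (p - q)) ^ (2:ℝ)) ^ (1/2:ℝ)
      ≤ (K * ((∫⁻ q : ℝ × ℝ, (a q) ^ (2:ℝ)) * (∫⁻ q : ℝ × ℝ, (b q) ^ (2:ℝ)))) ^ (1/2:ℝ) :=
        ENNReal.rpow_le_rpow step3 (by norm_num)
    _ = K ^ (1/2:ℝ) * ((∫⁻ q : ℝ × ℝ, (a q) ^ (2:ℝ)) ^ (1/2:ℝ) *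
        (∫⁻ q : ℝ × ℝ, (b q) ^ (2:ℝ)) ^ (1/2:ℝ)) := by
        rw [ENNReal.mul_rpow_of_nonneg _ _ (by norm_num : (0:ℝ) ≤ 1/2),
          ENNReal.mul_rpow_of_nonneg _ _ (by norm_num : (0:ℝ) ≤ 1/2)]
    _ = ENNReal.ofReal (Real.sqrt ((2:ℝ)^(d₁+d₂+7) / jap D)) * L2 F * L2 G := by
        rw [hK, ENNReal.ofReal_rpow_of_pos hpos, ← Real.sqrt_eq_rpow, L2_eq, L2_eq]
        ring
section Main

lemma measurableSet_Aset (j : ℕ) : MeasurableSet (Aset j) := by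
  have hφ : Measurable fun p : ℝ × ℝ => jap p.2 := (continuous_jap.comp continuous_snd).measurable
  rw [Aset, Set.setOf_and]
  exact (measurableSet_le measurable_const hφ).inter (measurableSet_lt hφ measurable_const)

lemma L2On_eq (j d : ℕ) (f : ℝ × ℝ → ℂ) (hsupp : Function.support f ⊆ Aset j) :
    L2On f (Aset j ∩ Bset d) = L2 ((Bset d).indicator f) := by
  rw [L2On, L2]
  congr 1
  rw [← MeasureTheory.lintegral_indicator ((measurableSet_Aset j).inter (measurableSet_Bset d))]
  apply lintegral_congr
  intro p
  by_cases hp : p ∈ Bset d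
  · by_cases hpA : p ∈ Aset j
    · simp [Set.indicator_apply, Set.mem_inter_iff, hp, hpA]
    · have hz : f p = 0 := by
        by_contra h
        exact hpA (hsupp h)
      simp [Set.indicator_apply, Set.mem_inter_iff, hp, hpA, hz]
  · simp [Set.indicator_apply, Set.mem_inter_iff, hp]

lemma Xnorm_ge (f : ℝ × ℝ → ℂ) (j : ℕ) :
    (2:ℝ≥0∞) ^ (-(j:ℝ)) * ∑' d : ℕ, (2:ℝ≥0∞) ^ ((d:ℝ)/2) * L2On f (Aset j ∩ Bset d)
      ≤ Xnorm f := by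
  rw [Xnorm]
  set T : ℝ≥0∞ := (2:ℝ≥0∞) ^ (-(j:ℝ)) * ∑' d : ℕ, (2:ℝ≥0∞) ^ ((d:ℝ)/2) * L2On f (Aset j ∩ Bset d)
    with hT
  calc T = (T ^ 2) ^ (1/2:ℝ) := by
        rw [← ENNReal.rpow_natCast T 2, ← ENNReal.rpow_mul]
        norm_num
    _ ≤ _ := ENNReal.rpow_le_rpow (ENNReal.le_tsum j) (by norm_num)

lemma const_bound (d₁ d₂ : ℕ) (D : ℝ) :
    Real.sqrt ((2:ℝ)^(d₁+d₂+7) / jap D)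
      ≤ (2:ℝ)^((d₁:ℝ)/2) * (2:ℝ)^((d₂:ℝ)/2) * (16 * jap D ^ (-(1/2):ℝ)) := by
  have hj := jap_pos D
  have hsq : ∀ d : ℕ, Real.sqrt ((2:ℝ)^d) = (2:ℝ)^((d:ℝ)/2) := by
    intro d
    rw [← Real.rpow_natCast 2 d, Real.sqrt_eq_rpow, ← Real.rpow_mul (by norm_num)]
    ring_nf
  have h1 : (2:ℝ)^(d₁+d₂+7) / jap D = (2:ℝ)^d₁ * ((2:ℝ)^d₂ * (128 * (jap D)⁻¹)) := by
    rw [show d₁+d₂+7 = d₁+(d₂+7) by omega, pow_add, pow_add, div_eq_mul_inv]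
    ring
  rw [h1, Real.sqrt_mul (by positivity), Real.sqrt_mul (by positivity),
    Real.sqrt_mul (by norm_num : (0:ℝ) ≤ 128), hsq, hsq]
  have h128 : Real.sqrt 128 ≤ 16 := by
    rw [show (16:ℝ) = Real.sqrt (16^2) from (Real.sqrt_sq (by norm_num)).symm]
    exact Real.sqrt_le_sqrt (by norm_num)
  have hjinv : Real.sqrt ((jap D)⁻¹) = jap D ^ (-(1/2):ℝ) := by
    rw [Real.sqrt_inv, Real.sqrt_eq_rpow, ← Real.rpow_neg hj.le]
  rw [hjinv]
  have hx : (0:ℝ) ≤ jap D ^ (-(1/2):ℝ) := Real.rpow_nonneg hj.le _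
  have h2 : Real.sqrt 128 * jap D ^ (-(1/2):ℝ) ≤ 16 * jap D ^ (-(1/2):ℝ) :=
    mul_le_mul_of_nonneg_right h128 hx
  have hp1 : (0:ℝ) ≤ (2:ℝ)^((d₁:ℝ)/2) := by positivity
  have hp2 : (0:ℝ) ≤ (2:ℝ)^((d₂:ℝ)/2) := by positivity
  calc (2:ℝ)^((d₁:ℝ)/2) * ((2:ℝ)^((d₂:ℝ)/2) * (Real.sqrt 128 * jap D ^ (-(1/2):ℝ)))
      ≤ (2:ℝ)^((d₁:ℝ)/2) * ((2:ℝ)^((d₂:ℝ)/2) * (16 * jap D ^ (-(1/2):ℝ))) :=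
        mul_le_mul_of_nonneg_left (mul_le_mul_of_nonneg_left h2 hp2) hp1
    _ = _ := by ring

lemma const_bound' (d₁ d₂ : ℕ) (D : ℝ) :
    ENNReal.ofReal (Real.sqrt ((2:ℝ)^(d₁+d₂+7) / jap D))
      ≤ (2:ℝ≥0∞)^((d₁:ℝ)/2) * (2:ℝ≥0∞)^((d₂:ℝ)/2) *
        ENNReal.ofReal (16 * jap D ^ (-(1/2):ℝ)) := by
  have hj := jap_pos D
  calc ENNReal.ofReal (Real.sqrt ((2:ℝ)^(d₁+d₂+7) / jap D))
      ≤ ENNReal.ofReal ((2:ℝ)^((d₁:ℝ)/2) * (2:ℝ)^((d₂:ℝ)/2) * (16 * jap D ^ (-(1/2):ℝ))) :=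
        ENNReal.ofReal_le_ofReal (const_bound d₁ d₂ D)
    _ = _ := by
        rw [ENNReal.ofReal_mul (by positivity), ENNReal.ofReal_mul (by positivity)]
        congr 2
        · rw [← ENNReal.ofReal_rpow_of_pos (by norm_num : (0:ℝ) < 2)]
          norm_num
        · rw [← ENNReal.ofReal_rpow_of_pos (by norm_num : (0:ℝ) < 2)]
          norm_num

end Main

/-- **Bilinear estimate near the parabola**: if `f`, `g` are supported on `A_{j₁}`,
`A_{j₂}` respectively, with `ξ`-supports separated by at least `D`, then
`∥f*g∥_{L²} ≤ C 2^{j₁+j₂} ⟨D⟩^{-1/2} ∥f∥_X ∥g∥_X`. -/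
theorem bilinear_estimate :
    ∃ C : ℝ, 0 < C ∧ ∀ (j₁ j₂ : ℕ) (D : ℝ), 0 ≤ D →
      ∀ f g : ℝ × ℝ → ℂ, Reasonable f → Reasonable g →
        Function.support f ⊆ Aset j₁ → Function.support g ⊆ Aset j₂ →
        (∀ p q : ℝ × ℝ, f p ≠ 0 → g q ≠ 0 → D ≤ |p.2 - q.2|) →
        L2 (conv f g) ≤
          ENNReal.ofReal (C * (2 : ℝ) ^ (j₁ + j₂) * jap D ^ (-(1 / 2) : ℝ)) *
            Xnorm f * Xnorm g := by
  refine ⟨16, by norm_num, ?_⟩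
  intro j₁ j₂ D hD f g hf hg hfA hgA hsep
  obtain ⟨hfm, -, hfc⟩ := hf
  obtain ⟨hgm, -, hgc⟩ := hg
  obtain ⟨N₁, hN₁⟩ := exists_decomp hfc
  obtain ⟨N₂, hN₂⟩ := exists_decomp hgc
  set S := Finset.range N₁ ×ˢ Finset.range N₂ with hS
  set J : ℕ × ℕ → (ℝ × ℝ) → ℝ≥0∞ := fun c p =>
    ∫⁻ q : ℝ × ℝ, (‖(Bset c.1).indicator f q‖₊ : ℝ≥0∞) *
      (‖(Bset c.2).indicator g (p - q)‖₊ : ℝ≥0∞) with hJ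
  have hamm : ∀ d : ℕ, Measurable fun q : ℝ × ℝ => ((‖(Bset d).indicator f q‖₊ : ℝ≥0∞)) :=
    fun d => (hfm.indicator (measurableSet_Bset d)).enorm
  have hbmm : ∀ d : ℕ, Measurable fun q : ℝ × ℝ => ((‖(Bset d).indicator g q‖₊ : ℝ≥0∞)) :=
    fun d => (hgm.indicator (measurableSet_Bset d)).enorm
  have hsummand : ∀ (p : ℝ × ℝ) (d₁ d₂ : ℕ), Measurable fun q : ℝ × ℝ =>
      (‖(Bset d₁).indicator f q‖₊ : ℝ≥0∞) * (‖(Bset d₂).indicator g (p - q)‖₊ : ℝ≥0∞) :=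
    fun p d₁ d₂ => (hamm d₁).mul ((hbmm d₂).comp (measurable_const.sub measurable_id))
  have hJm : ∀ c, Measurable (J c) := by
    intro c
    have hΦ : Measurable fun z : (ℝ × ℝ) × (ℝ × ℝ) =>
        (‖(Bset c.1).indicator f z.2‖₊ : ℝ≥0∞) *
          (‖(Bset c.2).indicator g (z.1 - z.2)‖₊ : ℝ≥0∞) :=
      ((hamm c.1).comp measurable_snd).mul
        ((hbmm c.2).comp (measurable_fst.sub measurable_snd))
    exact hΦ.lintegral_prod_right'
  -- pointwise bound
  have hpt : ∀ p : ℝ × ℝ, (‖conv f g p‖₊ : ℝ≥0∞) ≤ ∑ c ∈ S, J c p := by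
    intro p
    calc (‖conv f g p‖₊ : ℝ≥0∞)
        ≤ ∫⁻ q : ℝ × ℝ, (‖f q * g (p - q)‖₊ : ℝ≥0∞) :=
          MeasureTheory.enorm_integral_le_lintegral_enorm _
      _ = ∫⁻ q : ℝ × ℝ, (‖f q‖₊ : ℝ≥0∞) * (‖g (p - q)‖₊ : ℝ≥0∞) := by
          apply lintegral_congr
          intro q
          rw [nnnorm_mul, ENNReal.coe_mul]
      _ = ∫⁻ q : ℝ × ℝ, ∑ d₁ ∈ Finset.range N₁, ∑ d₂ ∈ Finset.range N₂,
            (‖(Bset d₁).indicator f q‖₊ : ℝ≥0∞) *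
              (‖(Bset d₂).indicator g (p - q)‖₊ : ℝ≥0∞) := by
          apply lintegral_congr
          intro q
          rw [hN₁ q, hN₂ (p - q), Finset.sum_mul_sum]
      _ = ∑ d₁ ∈ Finset.range N₁, ∑ d₂ ∈ Finset.range N₂, J (d₁, d₂) p := by
          rw [lintegral_finset_sum _
            (fun d₁ _ => Finset.measurable_sum _ (fun d₂ _ => hsummand p d₁ d₂))]
          exact Finset.sum_congr rfl fun d₁ _ =>
            lintegral_finset_sum _ (fun d₂ _ => hsummand p d₁ d₂)
      _ = ∑ c ∈ S, J c p := (Finset.sum_product (Finset.range N₁) (Finset.range N₂) (fun c => J c p)).symm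
  have hL2 : L2 (conv f g) ≤ ∑ c ∈ S, (∫⁻ p : ℝ × ℝ, (J c p) ^ (2:ℝ)) ^ (1/2:ℝ) := by
    rw [L2_eq]
    refine le_trans ?_ (lintegral_Lp_sum_le S J hJm)
    apply ENNReal.rpow_le_rpow _ (by norm_num)
    apply lintegral_mono
    intro p
    exact ENNReal.rpow_le_rpow (hpt p) (by norm_num)
  set M : ℝ≥0∞ := ENNReal.ofReal (16 * jap D ^ (-(1/2):ℝ)) with hM
  set u : ℕ → ℝ≥0∞ := fun d => (2:ℝ≥0∞)^((d:ℝ)/2) * L2 ((Bset d).indicator f) with hu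
  set v : ℕ → ℝ≥0∞ := fun d => (2:ℝ≥0∞)^((d:ℝ)/2) * L2 ((Bset d).indicator g) with hv
  have hpair : ∀ c : ℕ × ℕ, (∫⁻ p : ℝ × ℝ, (J c p) ^ (2:ℝ)) ^ (1/2:ℝ) ≤ M * (u c.1 * v c.2) := by
    intro c
    calc (∫⁻ p : ℝ × ℝ, (J c p) ^ (2:ℝ)) ^ (1/2:ℝ)
        ≤ ENNReal.ofReal (Real.sqrt ((2:ℝ)^(c.1+c.2+7) / jap D)) *
            L2 ((Bset c.1).indicator f) * L2 ((Bset c.2).indicator g) :=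
          core_pair c.1 c.2 D hD f g hfm hgm hsep
      _ ≤ ((2:ℝ≥0∞)^((c.1:ℝ)/2) * (2:ℝ≥0∞)^((c.2:ℝ)/2) * M) *
            L2 ((Bset c.1).indicator f) * L2 ((Bset c.2).indicator g) := by
          gcongr
          exact const_bound' c.1 c.2 D
      _ = M * (u c.1 * v c.2) := by
          rw [hu, hv]
          ring
  have hsum : ∑ c ∈ S, M * (u c.1 * v c.2)
      = M * ((∑ d₁ ∈ Finset.range N₁, u d₁) * (∑ d₂ ∈ Finset.range N₂, v d₂)) := by
    rw [Finset.sum_mul_sum, Finset.mul_sum, hS, Finset.sum_product]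
    apply Finset.sum_congr rfl
    intro d₁ _
    rw [Finset.mul_sum]
  set Tf : ℝ≥0∞ := ∑' d : ℕ, (2:ℝ≥0∞)^((d:ℝ)/2) * L2On f (Aset j₁ ∩ Bset d) with hTfdef
  set Tg : ℝ≥0∞ := ∑' d : ℕ, (2:ℝ≥0∞)^((d:ℝ)/2) * L2On g (Aset j₂ ∩ Bset d) with hTgdef
  have hTf : (∑ d₁ ∈ Finset.range N₁, u d₁) ≤ Tf := by
    calc ∑ d₁ ∈ Finset.range N₁, u d₁ ≤ ∑' d : ℕ, u d := ENNReal.sum_le_tsum _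
      _ = Tf := tsum_congr fun d => by rw [hu, L2On_eq j₁ d f hfA]
  have hTg : (∑ d₂ ∈ Finset.range N₂, v d₂) ≤ Tg := by
    calc ∑ d₂ ∈ Finset.range N₂, v d₂ ≤ ∑' d : ℕ, v d := ENNReal.sum_le_tsum _
      _ = Tg := tsum_congr fun d => by rw [hv, L2On_eq j₂ d g hgA]
  have hfinal : L2 (conv f g) ≤ M * (Tf * Tg) := by
    calc L2 (conv f g) ≤ ∑ c ∈ S, (∫⁻ p : ℝ × ℝ, (J c p) ^ (2:ℝ)) ^ (1/2:ℝ) := hL2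
      _ ≤ ∑ c ∈ S, M * (u c.1 * v c.2) := Finset.sum_le_sum (fun c _ => hpair c)
      _ = M * ((∑ d₁ ∈ Finset.range N₁, u d₁) * (∑ d₂ ∈ Finset.range N₂, v d₂)) := hsum
      _ ≤ M * (Tf * Tg) := by
          gcongr
  have h2pow : ENNReal.ofReal ((16:ℝ) * 2^(j₁+j₂) * jap D ^ (-(1/2):ℝ))
      = M * (2:ℝ≥0∞)^(j₁+j₂) := by
    rw [show (16:ℝ) * 2^(j₁+j₂) * jap D ^ (-(1/2):ℝ)
        = (16 * jap D ^ (-(1/2):ℝ)) * 2^(j₁+j₂) by ring]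
    rw [ENNReal.ofReal_mul (mul_nonneg (by norm_num) (Real.rpow_nonneg (jap_pos D).le _)), ENNReal.ofReal_pow (by norm_num)]
    norm_num [hM]
  have hone : (2:ℝ≥0∞)^(j₁+j₂) * ((2:ℝ≥0∞)^(-(j₁:ℝ)) * (2:ℝ≥0∞)^(-(j₂:ℝ))) = 1 := by
    rw [← ENNReal.rpow_natCast 2 (j₁+j₂),
      ← ENNReal.rpow_add _ _ two_ne_zero (by simp),
      ← ENNReal.rpow_add _ _ two_ne_zero (by simp),
      show ((j₁+j₂ : ℕ):ℝ) + (-(j₁:ℝ) + -(j₂:ℝ)) = 0 by push_cast; ring]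
    exact ENNReal.rpow_zero
  calc L2 (conv f g) ≤ M * (Tf * Tg) := hfinal
    _ = (M * (2:ℝ≥0∞)^(j₁+j₂)) * ((2:ℝ≥0∞)^(-(j₁:ℝ)) * Tf) *
        ((2:ℝ≥0∞)^(-(j₂:ℝ)) * Tg) := by
        have expand : (M * (2:ℝ≥0∞)^(j₁+j₂)) * ((2:ℝ≥0∞)^(-(j₁:ℝ)) * Tf) *
            ((2:ℝ≥0∞)^(-(j₂:ℝ)) * Tg)
            = (M * (Tf * Tg)) *
              ((2:ℝ≥0∞)^(j₁+j₂) * ((2:ℝ≥0∞)^(-(j₁:ℝ)) * (2:ℝ≥0∞)^(-(j₂:ℝ)))) := by ring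
        rw [expand, hone, mul_one]
    _ ≤ (M * (2:ℝ≥0∞)^(j₁+j₂)) * Xnorm f * Xnorm g := by
        gcongr
        · exact Xnorm_ge f j₁
        · exact Xnorm_ge g j₂
    _ = ENNReal.ofReal ((16:ℝ) * 2^(j₁+j₂) * jap D ^ (-(1/2):ℝ)) * Xnorm f * Xnorm g := by
        rw [h2pow]
end Core
end
end

section
/- There is an absolute constant C > 0 such that for all integers d₁ ≥ d₂ ≥ 0, all D ≥ 0, and all (τ,ξ) ∈ ℝ², the set {(τ₁,ξ₁) ∈ B_{d₁} : (τ−τ₁, ξ−ξ₁) ∈ B_{d₂} and |ξ₁ − (ξ−ξ₁)| ≥ D} has two-dimensional Lebesgue measure at most C 2^{d₁+d₂} / (2^{d₁/2} + D). -/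
open MeasureTheory Set
open scoped ENNReal NNReal

noncomputable section

/-! For `(τ₁, ξ₁)` in the set, adding the two modulation bounds eliminates `τ₁`:
`u = 2ξ₁ - ξ` satisfies `|u² - (2τ - ξ²)| < 2^(d₁+3)` and `|u| ≥ D`, while for fixed `ξ₁`
the variable `τ₁` ranges over an interval of length `2^(d₂+2)`. On either half-line the
admissible `u` have `|u - v| (u + v) = |u² - v²| < 2^(d₁+4)` with `u + v ≥ max(|u - v|, 2D)`,
so they span a length `≲ 2^d₁ / (2^(d₁/2) + D)`. -/

lemma volume_setOf_snd_mem_and_abs_fst_sub_lt {f : ℝ → ℝ} (hf : Measurable f) {T : Set ℝ}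
    (hT : MeasurableSet T) (w : ℝ) :
    volume {q : ℝ × ℝ | q.2 ∈ T ∧ |q.1 - f q.2| < w} = ENNReal.ofReal (2 * w) * volume T := by
  have hmeas : MeasurableSet {q : ℝ × ℝ | q.2 ∈ T ∧ |q.1 - f q.2| < w} :=
    (measurable_snd hT).inter
      (measurableSet_lt (measurable_fst.sub (hf.comp measurable_snd)).abs measurable_const)
  rw [Measure.volume_eq_prod, Measure.prod_apply_symm hmeas, ← lintegral_indicator_const hT]
  refine lintegral_congr fun y => ?_
  by_cases hy : y ∈ T
  · have hslice : (fun x => (x, y)) ⁻¹' {q : ℝ × ℝ | q.2 ∈ T ∧ |q.1 - f q.2| < w} =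
        Ioo (f y - w) (f y + w) := by
      ext x
      simp only [mem_preimage, mem_ofPred_eq, hy, true_and, mem_Ioo, abs_sub_lt_iff]
      constructor <;> rintro ⟨h₁, h₂⟩ <;> constructor <;> linarith
    rw [hslice, Real.volume_Ioo, indicator_of_mem hy]
    congr 1
    ring
  · simp [hy]

lemma abs_sub_mul_add_le_of_abs_sq_sub_lt {u v c M s D : ℝ} (hu : 0 ≤ u) (hv : 0 ≤ v)
    (hsM : s ^ 2 ≤ M) (hDu : D ≤ u) (hDv : D ≤ v)
    (hcu : |u ^ 2 - c| < M) (hcv : |v ^ 2 - c| < M) :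
    |u - v| * (s + D) ≤ 3 * M := by
  have hsum : |u - v| ≤ u + v := by
    rw [abs_le]; constructor <;> linarith
  have hprod : |u - v| * (u + v) < 2 * M := by
    rw [← abs_of_nonneg (by linarith : 0 ≤ u + v), ← abs_mul,
      show (u - v) * (u + v) = (u ^ 2 - c) - (v ^ 2 - c) by ring]
    linarith [abs_sub (u ^ 2 - c) (v ^ 2 - c)]
  have hD : |u - v| * (2 * D) ≤ |u - v| * (u + v) :=
    mul_le_mul_of_nonneg_left (by linarith) (abs_nonneg _)
  -- `|u - v| s ≤ (|u - v|² + s²) / 2` and `2 |u - v| D ≤ |u - v| (u + v) < 2M`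
  nlinarith [sq_nonneg (|u - v| - s), abs_nonneg (u - v)]

lemma volume_setOf_abs_sq_sub_lt_and_le_abs_le {c M s D : ℝ} (hs : 0 < s) (hsM : s ^ 2 ≤ M)
    (hD : 0 ≤ D) :
    volume {u : ℝ | |u ^ 2 - c| < M ∧ D ≤ |u|} ≤ ENNReal.ofReal (6 * M / (s + D)) := by
  set E := {u : ℝ | |u ^ 2 - c| < M ∧ D ≤ |u|}
  have hsD : 0 < s + D := by linarith
  have hpos : volume (E ∩ Ici 0) ≤ ENNReal.ofReal (3 * M / (s + D)) := by
    refine (Real.volume_le_diam _).trans (Metric.ediam_le fun u hu v hv => ?_)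
    obtain ⟨⟨hcu, hDu⟩, hu0 : 0 ≤ u⟩ := hu
    obtain ⟨⟨hcv, hDv⟩, hv0 : 0 ≤ v⟩ := hv
    rw [abs_of_nonneg hu0] at hDu
    rw [abs_of_nonneg hv0] at hDv
    rw [edist_dist, Real.dist_eq]
    exact ENNReal.ofReal_le_ofReal ((le_div_iff₀ hsD).2
      (abs_sub_mul_add_le_of_abs_sq_sub_lt hu0 hv0 hsM hDu hDv hcu hcv))
  have hneg : E ⊆ (E ∩ Ici 0) ∪ -(E ∩ Ici 0) := by
    intro u hu
    rcases le_total 0 u with h | h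
    · exact Or.inl ⟨hu, h⟩
    · refine Or.inr ⟨?_, neg_nonneg.2 h⟩
      simpa only [E, mem_ofPred_eq, neg_sq, abs_neg] using hu
  calc volume E ≤ volume (E ∩ Ici 0) + volume (-(E ∩ Ici 0)) :=
        (measure_mono hneg).trans (measure_union_le _ _)
    _ = 2 * volume (E ∩ Ici 0) := by rw [Measure.measure_neg, two_mul]
    _ ≤ 2 * ENNReal.ofReal (3 * M / (s + D)) := by gcongr
    _ = ENNReal.ofReal (6 * M / (s + D)) := by
        rw [← ENNReal.ofReal_ofNat 2, ← ENNReal.ofReal_mul zero_le_two]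
        ring_nf

lemma volume_preimage_mul_left_sub {a : ℝ} (ha : a ≠ 0) (b : ℝ) (E : Set ℝ) :
    volume ((fun y => a * y - b) ⁻¹' E) = ENNReal.ofReal |a⁻¹| * volume E := by
  have hcomp : (fun y => a * y - b) ⁻¹' E = (a * ·) ⁻¹' ((· + -b) ⁻¹' E) := by
    ext y; simp [sub_eq_add_neg]
  rw [hcomp, Real.volume_preimage_mul_left ha, measure_preimage_add_right]

lemma abs_fst_sub_sq_lt_of_mem_Bset {d : ℕ} {p : ℝ × ℝ} (hp : p ∈ Bset d) :
    |p.1 - p.2 ^ 2| < 2 ^ (d + 1) :=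
  (abs_le_jap _).trans_lt hp.2

lemma abs_sq_sub_lt_of_mem_Bset {d₁ d₂ : ℕ} (hd : d₂ ≤ d₁) {τ ξ : ℝ} {q : ℝ × ℝ}
    (h₁ : q ∈ Bset d₁) (h₂ : (τ - q.1, ξ - q.2) ∈ Bset d₂) :
    |(2 * q.2 - ξ) ^ 2 - (2 * τ - ξ ^ 2)| < 2 ^ (d₁ + 3) := by
  have hA₁ := abs_fst_sub_sq_lt_of_mem_Bset h₁
  have hA₂ : |τ - q.1 - (ξ - q.2) ^ 2| < 2 ^ (d₁ + 1) :=
    (abs_fst_sub_sq_lt_of_mem_Bset h₂).trans_le (pow_le_pow_right₀ one_le_two (by omega))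
  rw [show (2 * q.2 - ξ) ^ 2 - (2 * τ - ξ ^ 2) =
      -2 * ((q.1 - q.2 ^ 2) + (τ - q.1 - (ξ - q.2) ^ 2)) by ring,
    abs_mul, abs_neg, abs_two, show (2 : ℝ) ^ (d₁ + 3) = 2 * (2 * 2 ^ (d₁ + 1)) by ring]
  linarith [abs_add_le (q.1 - q.2 ^ 2) (τ - q.1 - (ξ - q.2) ^ 2)]

lemma resonant_set_subset {d₁ d₂ : ℕ} (hd : d₂ ≤ d₁) (D τ ξ : ℝ) :
    {q : ℝ × ℝ | q ∈ Bset d₁ ∧ (τ - q.1, ξ - q.2) ∈ Bset d₂ ∧ D ≤ |q.2 - (ξ - q.2)|} ⊆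
      {q : ℝ × ℝ | q.2 ∈ (fun y => 2 * y - ξ) ⁻¹'
          {u : ℝ | |u ^ 2 - (2 * τ - ξ ^ 2)| < 2 ^ (d₁ + 3) ∧ D ≤ |u|} ∧
        |q.1 - (τ - (ξ - q.2) ^ 2)| < 2 ^ (d₂ + 1)} := by
  rintro q ⟨h₁, h₂, hDq⟩
  refine ⟨⟨abs_sq_sub_lt_of_mem_Bset hd h₁ h₂, by convert hDq using 2; ring⟩, ?_⟩
  convert abs_fst_sub_sq_lt_of_mem_Bset h₂ using 1
  rw [← abs_neg]
  ring_nf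

lemma rpow_natCast_div_two_sq {x : ℝ} (hx : 0 ≤ x) (n : ℕ) :
    (x ^ ((n : ℝ) / 2)) ^ 2 = x ^ n := by
  rw [← Real.rpow_mul_natCast hx, Nat.cast_ofNat, div_mul_cancel₀ _ two_ne_zero,
    Real.rpow_natCast]

/-- **Measure bound for the resonant set**: for `d₁ ≥ d₂ ≥ 0`, `D ≥ 0` and any
`(τ,ξ) ∈ ℝ²`, the set `{(τ₁,ξ₁) ∈ B_{d₁} : (τ-τ₁, ξ-ξ₁) ∈ B_{d₂}, |ξ₁-(ξ-ξ₁)| ≥ D}`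
has measure at most `C 2^{d₁+d₂}/(2^{d₁/2}+D)`. -/
theorem resonant_set_measure_bound :
    ∃ C : ℝ, 0 < C ∧ ∀ (d₁ d₂ : ℕ), d₂ ≤ d₁ → ∀ D : ℝ, 0 ≤ D → ∀ τ ξ : ℝ,
      volume {q : ℝ × ℝ | q ∈ Bset d₁ ∧ (τ - q.1, ξ - q.2) ∈ Bset d₂ ∧
          D ≤ |q.2 - (ξ - q.2)|} ≤
        ENNReal.ofReal (C * (2 : ℝ) ^ (d₁ + d₂) / ((2 : ℝ) ^ ((d₁ : ℝ) / 2) + D)) := by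
  refine ⟨96, by norm_num, fun d₁ d₂ hd D hD τ ξ => ?_⟩
  set s : ℝ := 2 ^ ((d₁ : ℝ) / 2)
  set E := {u : ℝ | |u ^ 2 - (2 * τ - ξ ^ 2)| < 2 ^ (d₁ + 3) ∧ D ≤ |u|}
  have hs2 : s ^ 2 ≤ 2 ^ (d₁ + 3) := by
    rw [rpow_natCast_div_two_sq zero_le_two]
    exact pow_le_pow_right₀ one_le_two (by omega)
  calc _ ≤ _ := measure_mono (resonant_set_subset hd D τ ξ)
    _ = ENNReal.ofReal (2 * 2 ^ (d₂ + 1)) * (ENNReal.ofReal |2⁻¹| * volume E) := by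
        rw [volume_setOf_snd_mem_and_abs_fst_sub_lt (f := fun y => τ - (ξ - y) ^ 2)
          (by fun_prop) (by measurability), volume_preimage_mul_left_sub two_ne_zero]
    _ ≤ ENNReal.ofReal (2 * 2 ^ (d₂ + 1)) *
          (ENNReal.ofReal |2⁻¹| * ENNReal.ofReal (6 * 2 ^ (d₁ + 3) / (s + D))) := by
        gcongr
        exact volume_setOf_abs_sq_sub_lt_and_le_abs_le (by positivity) hs2 hD
    _ = ENNReal.ofReal (96 * 2 ^ (d₁ + d₂) / (s + D)) := by
        rw [← ENNReal.ofReal_mul (by positivity), ← ENNReal.ofReal_mul (by positivity),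
          abs_of_pos (by norm_num)]
        ring_nf
end
end
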